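/- arXiv:1309.3816 — 12 statements merged into one kernel-verified Lean document; each statement's English description precedes it below -/
import Mathlib

section
/- Let f:[1,(1-d)/c]→[1,c+d] be the linear Pareto front f(x)=c·x+d with constants c<0 and d>1-c. For μ≥2, the equally spaced points x_i = 1 + ((i-1)/(μ-1))·((1-d)/c − 1), i=1,…,μ, achieve a multiplicative approximation ratio of exactly d(μ−1)/(d(μ−2) − c + 1) with respect to f. -/
open Set Finset Real

def IsApprox (f : ℝ → ℝ) (a b : ℝ) (X : Set ℝ) (δ : ℝ) : Prop :=
  1 ≤ δ ∧ ∀ x ∈ Set.Icc a b, ∃ y ∈ X, x ≤ δ * y ∧ f x ≤ δ * f y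

noncomputable def approxRatio (f : ℝ → ℝ) (a b : ℝ) (X : Set ℝ) : ℝ :=
  sInf {δ : ℝ | IsApprox f a b X δ}

theorem stmt0 (c d : ℝ) (hc : c < 0) (hd : 1 - c < d) (μ : ℕ) (hμ : 2 ≤ μ) :
    approxRatio (fun x => c * x + d) 1 ((1 - d) / c)
      {y | ∃ i : ℕ, 1 ≤ i ∧ i ≤ μ ∧
        y = 1 + (((i : ℝ) - 1) / ((μ : ℝ) - 1)) * ((1 - d) / c - 1)}
      = d * ((μ : ℝ) - 1) / (d * ((μ : ℝ) - 2) - c + 1) := by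
  classical
  have hc0 : c ≠ 0 := ne_of_lt hc
  set m : ℝ := (μ : ℝ) with hm
  have hm2 : (2:ℝ) ≤ m := by rw [hm]; exact_mod_cast hμ
  have hm1' : (0:ℝ) < m - 1 := by linarith
  have hd1 : (1:ℝ) < d := by linarith
  set L : ℝ := (1 - d) / c - 1 with hLdef
  have hL : 0 < L := by
    rw [hLdef, lt_sub_iff_add_lt, zero_add, lt_div_iff_of_neg hc]; nlinarith
  set h : ℝ := L / (m - 1) with hh
  have hpos : 0 < h := div_pos hL hm1'
  have hchneg : c * h < 0 := mul_neg_of_neg_of_pos hc hpos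
  have hch : c * h * (m - 1) = 1 - d - c := by
    rw [hh, hLdef]; field_simp
  have hD : 0 < d + c * h := by nlinarith
  have hD0 : d + c * h ≠ 0 := ne_of_gt hD
  set δ₀ : ℝ := d / (d + c * h) with hδ₀
  have hδ0 : δ₀ * (d + c * h) = d := div_mul_cancel₀ d hD0
  have hδ1 : 1 < δ₀ := by
    rw [hδ₀, lt_div_iff₀ hD]; linarith
  have key : ∀ t : ℝ, c * (δ₀ * (t - h)) + d = δ₀ * (c * t + d) := by
    intro t; linear_combination -hδ0
  have hXend : 1 + (m - 1) * h = (1 - d) / c := by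
    rw [hh, hLdef]; field_simp; ring
  have hfX : c * (1 + (m - 1) * h) + d = 1 := by
    rw [hXend]; field_simp; ring
  have hX1 : (1:ℝ) ≤ 1 + (m - 1) * h := by nlinarith
  -- f(1+h) ≥ 1
  have hfx2 : 1 ≤ c + d + c * h := by
    have hid : c + d + c * h = 1 - c * (h * (m - 2)) := by linear_combination hfX
    have : c * (h * (m - 2)) ≤ 0 :=
      mul_nonpos_of_nonpos_of_nonneg hc.le (mul_nonneg hpos.le (by linarith))
    linarith
  -- Upper bound: δ₀ is an approximation
  have hmem : IsApprox (fun x => c * x + d) 1 ((1 - d) / c)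
      {y | ∃ i : ℕ, 1 ≤ i ∧ i ≤ μ ∧ y = 1 + (((i : ℝ) - 1) / (m - 1)) * L} δ₀ := by
    refine ⟨hδ1.le, fun x hx => ?_⟩
    obtain ⟨hx1, hx2⟩ := hx
    have hcast : ((μ - 1 : ℕ) : ℝ) = m - 1 := by
      rw [Nat.cast_sub (by omega : 1 ≤ μ)]; push_cast; ring
    have hex : ∃ n : ℕ, x ≤ δ₀ * (1 + (n : ℝ) * h) := by
      refine ⟨μ - 1, ?_⟩
      rw [hcast]
      calc x ≤ (1 - d) / c := hx2
        _ = 1 + (m - 1) * h := hXend.symm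
        _ ≤ δ₀ * (1 + (m - 1) * h) := le_mul_of_one_le_left (by linarith) hδ1.le
    set n := Nat.find hex with hn
    have hspec : x ≤ δ₀ * (1 + (n : ℝ) * h) := Nat.find_spec hex
    have hnle : n ≤ μ - 1 := by
      apply Nat.find_le
      rw [hcast]
      calc x ≤ (1 - d) / c := hx2
        _ = 1 + (m - 1) * h := hXend.symm
        _ ≤ δ₀ * (1 + (m - 1) * h) := le_mul_of_one_le_left (by linarith) hδ1.le
    refine ⟨1 + (n : ℝ) * h, ⟨n + 1, by omega, by omega, ?_⟩, hspec, ?_⟩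
    · rw [hh]; push_cast; ring
    · show c * x + d ≤ δ₀ * (c * (1 + (n : ℝ) * h) + d)
      rcases Nat.eq_zero_or_pos n with h0 | hposn
      · rw [h0]
        push_cast
        have hcx : c * x ≤ c * 1 := mul_le_mul_of_nonpos_left hx1 hc.le
        nlinarith
      · have hmin : ¬ x ≤ δ₀ * (1 + ((n - 1 : ℕ) : ℝ) * h) :=
          Nat.find_min hex (by omega)
        rw [Nat.cast_sub (by omega : 1 ≤ n)] at hmin
        push_cast at hmin
        push_cast
        have hlt : δ₀ * (1 + ((n : ℝ) - 1) * h) < x := lt_of_not_ge hmin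
        have h2 := key (1 + (n : ℝ) * h)
        have h4 : (1:ℝ) + (n : ℝ) * h - h = 1 + ((n : ℝ) - 1) * h := by ring
        rw [h4] at h2
        have h3 : c * x ≤ c * (δ₀ * (1 + ((n : ℝ) - 1) * h)) :=
          mul_le_mul_of_nonpos_left hlt.le hc.le
        linarith
  -- Lower bound
  have hlb : ∀ δ ∈ {δ : ℝ | IsApprox (fun x => c * x + d) 1 ((1 - d) / c)
      {y | ∃ i : ℕ, 1 ≤ i ∧ i ≤ μ ∧ y = 1 + (((i : ℝ) - 1) / (m - 1)) * L} δ}, δ₀ ≤ δ := by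
    rintro δ ⟨hδ1', hδ2⟩
    have hδx2 : δ₀ ≤ 1 + h := by
      rw [hδ₀, div_le_iff₀ hD]
      nlinarith [mul_pos hpos (show (0:ℝ) < c + d + c * h by linarith)]
    have hx2dom : δ₀ ∈ Set.Icc (1:ℝ) ((1 - d) / c) := by
      constructor
      · exact hδ1.le
      · rw [← hXend]; nlinarith
    obtain ⟨y, ⟨i, hi1, hiμ, hy⟩, hxy, hfxy⟩ := hδ2 δ₀ hx2dom
    simp only [] at hfxy
    by_cases hi : i = 1
    · subst hi
      have hy1 : y = 1 := by rw [hy]; push_cast; ring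
      rw [hy1, mul_one] at hxy
      exact hxy
    · have hi2 : (2:ℝ) ≤ (i : ℝ) := by
        have : 2 ≤ i := by omega
        exact_mod_cast this
      have hy2 : 1 + h ≤ y := by
        rw [hy, hh]
        have hdiff : ((i:ℝ) - 1) / (m - 1) * L - L / (m - 1) = ((i:ℝ) - 2) / (m - 1) * L := by
          field_simp; ring
        linarith [hdiff, mul_nonneg (div_nonneg (by linarith : (0:ℝ) ≤ (i:ℝ) - 2) hm1'.le) hL.le]
      have hfy : c * y + d ≤ c * (1 + h) + d := by
        have := mul_le_mul_of_nonpos_left hy2 hc.le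
        linarith
      have hkey2 : c * δ₀ + d = δ₀ * (c * (1 + h) + d) := by
        linear_combination key (1 + h)
      have hF : (1:ℝ) ≤ c * (1 + h) + d := by linarith [hfx2]
      have hchain : δ₀ * (c * (1 + h) + d) ≤ δ * (c * (1 + h) + d) := by
        calc δ₀ * (c * (1 + h) + d) = c * δ₀ + d := hkey2.symm
          _ ≤ δ * (c * y + d) := hfxy
          _ ≤ δ * (c * (1 + h) + d) := mul_le_mul_of_nonneg_left hfy (by linarith)
      exact le_of_mul_le_mul_right hchain (by linarith : (0:ℝ) < c * (1 + h) + d)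
  have hsinf : approxRatio (fun x => c * x + d) 1 ((1 - d) / c)
      {y | ∃ i : ℕ, 1 ≤ i ∧ i ≤ μ ∧ y = 1 + (((i : ℝ) - 1) / (m - 1)) * L} = δ₀ := by
    unfold approxRatio
    exact le_antisymm (csInf_le ⟨δ₀, hlb⟩ hmem) (le_csInf ⟨δ₀, hmem⟩ hlb)
  have hDval : (d + c * h) * (m - 1) = d * (m - 2) - c + 1 := by linear_combination hch
  have hdenpos : 0 < d * (m - 2) - c + 1 := by rw [← hDval]; exact mul_pos hD hm1'
  rw [hsinf, hδ₀, div_eq_div_iff hD.ne' hdenpos.ne']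
  linear_combination -d * hDval
end

section
/- Let f:[x_min,x_max]→ℝ be a continuous strictly decreasing Pareto front with x_min>0 and f(x_max)>0, and let X={x_1,…,x_μ} with x_1=x_min, x_μ=x_max, x_i≤x_{i+1}. If there exist δ>1 and points z_1,…,z_{μ−1} with x_i ≤ z_i ≤ x_{i+1} and δ = z_i/x_i = f(z_i)/f(x_{i+1}) for all 1≤i<μ, then X minimizes the approximation ratio among all μ-point subsets of the front containing both extreme points, and its approximation ratio equals δ. -/
open Set Finset Real

lemma chain_mono (μ : ℕ) (x : ℕ → ℝ)
    (hmono : ∀ i, 1 ≤ i → i < μ → x i ≤ x (i + 1)) :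
    ∀ i j, 1 ≤ i → i ≤ j → j ≤ μ → x i ≤ x j := by
  intro i j hi hij
  induction j, hij using Nat.le_induction with
  | base => intro _; exact le_refl _
  | succ j hij ih =>
      intro hjμ
      exact le_trans (ih (by omega)) (hmono j (by omega) (by omega))

lemma exists_seg (μ : ℕ) (x : ℕ → ℝ) (hμ : 2 ≤ μ)
    (hmono : ∀ i, 1 ≤ i → i < μ → x i ≤ x (i + 1))
    (t : ℝ) (h1 : x 1 ≤ t) (h2 : t ≤ x μ) :
    ∃ i, 1 ≤ i ∧ i < μ ∧ x i ≤ t ∧ t ≤ x (i + 1) := by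
  classical
  set P : ℕ → Prop := fun i => 1 ≤ i ∧ x i ≤ t with hP
  have hP1 : P 1 := ⟨le_refl 1, h1⟩
  have h1μ : 1 ≤ μ := by omega
  have hk1 : 1 ≤ Nat.findGreatest P μ := Nat.le_findGreatest h1μ hP1
  have hkμ : Nat.findGreatest P μ ≤ μ := Nat.findGreatest_le μ
  have hPk : P (Nat.findGreatest P μ) := Nat.findGreatest_spec (by omega) hP1
  rcases eq_or_lt_of_le hkμ with heq | hlt
  · -- k = μ : t = x μ
    have hxt : x μ ≤ t := by rw [← heq]; exact hPk.2
    have ht : t = x μ := le_antisymm h2 hxt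
    refine ⟨μ - 1, by omega, by omega, ?_, ?_⟩
    · have : x (μ - 1) ≤ x (μ - 1 + 1) := hmono (μ - 1) (by omega) (by omega)
      rw [show μ - 1 + 1 = μ by omega] at this
      rw [ht]; exact this
    · rw [show μ - 1 + 1 = μ by omega]; exact h2
  · -- k < μ
    have hnP : ¬ P (Nat.findGreatest P μ + 1) :=
      Nat.findGreatest_is_greatest (n := μ) (by omega) (by omega)
    have hxk1 : t < x (Nat.findGreatest P μ + 1) := by
      by_contra hc
      push_neg at hc
      exact hnP ⟨by omega, hc⟩
    exact ⟨Nat.findGreatest P μ, hk1, hlt, hPk.2, le_of_lt hxk1⟩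

set_option maxHeartbeats 1000000 in
theorem stmt1 (xmin xmax : ℝ) (f : ℝ → ℝ) (μ : ℕ) (hμ : 2 ≤ μ)
    (hxmin : 0 < xmin) (hxx : xmin < xmax)
    (hcont : ContinuousOn f (Set.Icc xmin xmax))
    (hanti : StrictAntiOn f (Set.Icc xmin xmax))
    (hfpos : 0 < f xmax)
    (x : ℕ → ℝ) (hx1 : x 1 = xmin) (hxμ : x μ = xmax)
    (hmono : ∀ i, 1 ≤ i → i < μ → x i ≤ x (i + 1))
    (δ : ℝ) (hδ : 1 < δ) (z : ℕ → ℝ)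
    (hz : ∀ i, 1 ≤ i → i < μ → x i ≤ z i ∧ z i ≤ x (i + 1) ∧
      δ = z i / x i ∧ δ = f (z i) / f (x (i + 1))) :
    approxRatio f xmin xmax {y | ∃ i, 1 ≤ i ∧ i ≤ μ ∧ y = x i} = δ ∧
    ∀ Y : Set ℝ, Y ⊆ Set.Icc xmin xmax → Y.Finite → Y.ncard = μ →
      xmin ∈ Y → xmax ∈ Y →
      approxRatio f xmin xmax {y | ∃ i, 1 ≤ i ∧ i ≤ μ ∧ y = x i} ≤
        approxRatio f xmin xmax Y := by
  have hminI : xmin ∈ Set.Icc xmin xmax := Set.left_mem_Icc.2 (le_of_lt hxx)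
  have hmaxI : xmax ∈ Set.Icc xmin xmax := Set.right_mem_Icc.2 (le_of_lt hxx)
  set X : Set ℝ := {y | ∃ i, 1 ≤ i ∧ i ≤ μ ∧ y = x i} with hXdef
  have hchain := chain_mono μ x hmono
  have hxI : ∀ i, 1 ≤ i → i ≤ μ → x i ∈ Set.Icc xmin xmax := by
    intro i hi hiμ
    constructor
    · rw [← hx1]; exact hchain 1 i le_rfl hi hiμ
    · rw [← hxμ]; exact hchain i μ hi hiμ le_rfl
  have hxpos : ∀ i, 1 ≤ i → i ≤ μ → 0 < x i := fun i hi hiμ =>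
    lt_of_lt_of_le hxmin (hxI i hi hiμ).1
  have hfpos' : ∀ t ∈ Set.Icc xmin xmax, 0 < f t := by
    intro t ht
    rcases eq_or_lt_of_le ht.2 with h | h
    · rw [h]; exact hfpos
    · exact lt_trans hfpos (hanti ht hmaxI h)
  have hzx : ∀ i, 1 ≤ i → i < μ → z i = δ * x i := by
    intro i hi hiμ
    have h := (hz i hi hiμ).2.2.1
    rw [eq_div_iff (ne_of_gt (hxpos i hi (le_of_lt hiμ)))] at h
    linarith
  have hfz : ∀ i, 1 ≤ i → i < μ → f (z i) = δ * f (x (i + 1)) := by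
    intro i hi hiμ
    have h := (hz i hi hiμ).2.2.2
    rw [eq_div_iff (ne_of_gt (hfpos' _ (hxI (i+1) (by omega) (by omega))))] at h
    linarith
  have hzI : ∀ i, 1 ≤ i → i < μ → z i ∈ Set.Icc xmin xmax := by
    intro i hi hiμ
    constructor
    · exact le_trans (hxI i hi (le_of_lt hiμ)).1 (hz i hi hiμ).1
    · exact le_trans (hz i hi hiμ).2.1 (hxI (i+1) (by omega) (by omega)).2
  -- X is a δ-approximation
  have memδ : IsApprox f xmin xmax X δ := by
    refine ⟨le_of_lt hδ, fun t ht => ?_⟩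
    obtain ⟨i, hi1, hiμ, hle, hge⟩ :=
      exists_seg μ x hμ hmono t (hx1 ▸ ht.1) (hxμ ▸ ht.2)
    rcases le_total t (z i) with h | h
    · refine ⟨x i, ⟨i, hi1, le_of_lt hiμ, rfl⟩, ?_, ?_⟩
      · rw [← hzx i hi1 hiμ]; exact h
      · have h1 : f t ≤ f (x i) :=
          hanti.antitoneOn (hxI i hi1 (le_of_lt hiμ)) ht hle
        have h2 : 0 < f (x i) := hfpos' _ (hxI i hi1 (le_of_lt hiμ))
        nlinarith
    · refine ⟨x (i+1), ⟨i+1, by omega, by omega, rfl⟩, ?_, ?_⟩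
      · have h2 : 0 < x (i+1) := hxpos (i+1) (by omega) (by omega)
        nlinarith
      · rw [← hfz i hi1 hiμ]
        exact hanti.antitoneOn (hzI i hi1 hiμ) ht h
  -- every approximation factor for X is at least δ
  have lbX : ∀ d ∈ {δ' | IsApprox f xmin xmax X δ'}, δ ≤ d := by
    intro d hd
    by_contra hcon
    push_neg at hcon
    obtain ⟨hd1, hcov⟩ := hd
    have h1μ' : 1 < μ := by omega
    obtain ⟨yy, ⟨j, hj1, hjμ, rfl⟩, hw1, hw2⟩ := hcov (z 1) (hzI 1 le_rfl h1μ')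
    have hz1 := hzx 1 le_rfl h1μ'
    rcases le_or_gt (x j) (x 1) with h | h
    · have h1 : d * x j ≤ d * x 1 := by nlinarith
      have h2 : 0 < x 1 := hxpos 1 le_rfl (by omega)
      nlinarith
    · have hj2 : 2 ≤ j := by
        rcases Nat.lt_or_ge j 2 with h' | h'
        · interval_cases j
          · exact absurd h (lt_irrefl _)
        · exact h'
      have h3 : x 2 ≤ x j := hchain 2 j one_le_two hj2 hjμ
      have h4 : f (x j) ≤ f (x 2) :=
        hanti.antitoneOn (hxI 2 (by omega) hμ) (hxI j hj1 hjμ) h3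
      have h5 : 0 < f (x 2) := hfpos' _ (hxI 2 (by omega) hμ)
      have h6 : f (z 1) = δ * f (x 2) := hfz 1 le_rfl h1μ'
      nlinarith
  have hEq : approxRatio f xmin xmax X = δ :=
    le_antisymm (csInf_le ⟨δ, lbX⟩ memδ) (le_csInf ⟨δ, memδ⟩ lbX)
  refine ⟨hEq, fun Y hYsub hYfin hYcard hminY hmaxY => ?_⟩
  rw [hEq]
  have hfmm : f xmax < f xmin := hanti hminI hmaxI hxx
  have hD1 : 1 ≤ f xmin / f xmax := by
    rw [one_le_div hfpos]; linarith
  have memY : IsApprox f xmin xmax Y (f xmin / f xmax) := by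
    refine ⟨hD1, fun t ht => ⟨xmax, hmaxY, ?_, ?_⟩⟩
    · nlinarith [ht.2, hxmin.trans hxx]
    · rw [div_mul_cancel₀ _ (ne_of_gt hfpos)]
      exact hanti.antitoneOn hminI ht ht.1
  refine le_csInf ⟨_, memY⟩ ?_
  intro d hd
  by_contra hcon
  push_neg at hcon
  obtain ⟨hd1, hcov⟩ := hd
  classical
  have hcard : hYfin.toFinset.card = μ := by
    rw [← Set.ncard_eq_toFinset_card Y hYfin]; exact hYcard
  set e := hYfin.toFinset.orderIsoOfFin hcard with he
  set y : Fin μ → ℝ := fun i => (e i : ℝ) with hy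
  have ymem : ∀ i, y i ∈ Y := fun i => hYfin.mem_toFinset.1 (e i).2
  have ymono : StrictMono y := fun a b hab => Subtype.coe_lt_coe.2 (e.lt_iff_lt.2 hab)
  have ysurj : ∀ w ∈ Y, ∃ i, y i = w := by
    intro w hw
    refine ⟨e.symm ⟨w, hYfin.mem_toFinset.2 hw⟩, ?_⟩
    simp [hy]
  have yIcc : ∀ i, y i ∈ Set.Icc xmin xmax := fun i => hYsub (ymem i)
  have hμ0 : 0 < μ := by omega
  have y0 : y ⟨0, hμ0⟩ = xmin := by
    obtain ⟨k0, hk0⟩ := ysurj xmin hminY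
    refine le_antisymm ?_ (yIcc _).1
    rw [← hk0]
    exact ymono.monotone (Fin.mk_le_of_le_val (Nat.zero_le _))
  have hμ1 : μ - 1 < μ := by omega
  have ylast : y ⟨μ - 1, hμ1⟩ = xmax := by
    obtain ⟨k1, hk1⟩ := ysurj xmax hmaxY
    refine le_antisymm (yIcc _).2 ?_
    rw [← hk1]
    refine ymono.monotone ?_
    have hk1lt := k1.isLt
    exact Fin.le_def.2 (show (k1 : ℕ) ≤ μ - 1 by omega)
  -- key inductive step
  have K : ∀ n (h : n + 1 < μ), y ⟨n, by omega⟩ ≤ x (n+1) → y ⟨n+1, h⟩ < x (n+2) := by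
    intro n h ha
    have hi1 : 1 ≤ n + 1 := by omega
    have hiμ : n + 1 < μ := h
    have hn : n < μ := by omega
    have hyn := yIcc ⟨n, hn⟩
    have hynpos : 0 < y ⟨n, hn⟩ := lt_of_lt_of_le hxmin hyn.1
    have hxipos : 0 < x (n+1) := hxpos (n+1) hi1 (le_of_lt hiμ)
    have hdy : d * y ⟨n, hn⟩ < z (n+1) := by
      rw [hzx (n+1) hi1 hiμ]
      nlinarith
    set w := (d * y ⟨n, hn⟩ + z (n+1)) / 2 with hw
    have hw1 : d * y ⟨n, hn⟩ < w := by rw [hw]; linarith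
    have hw2 : w < z (n+1) := by rw [hw]; linarith
    have hwI : w ∈ Set.Icc xmin xmax := by
      constructor
      · nlinarith [hyn.1]
      · linarith [(hzI (n+1) hi1 hiμ).2]
    obtain ⟨yy, hyyY, hc1, hc2⟩ := hcov w hwI
    obtain ⟨k, hk⟩ := ysurj yy hyyY
    rw [← hk] at hc1 hc2
    have hkgt : (⟨n, hn⟩ : Fin μ) < k := by
      by_contra hle
      push_neg at hle
      have h1 : y k ≤ y ⟨n, hn⟩ := ymono.monotone hle
      nlinarith
    have hk1' : (⟨n+1, h⟩ : Fin μ) ≤ k := by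
      rw [Fin.le_def]
      rw [Fin.lt_def] at hkgt
      simpa using hkgt
    have h5 : y ⟨n+1, h⟩ ≤ y k := ymono.monotone hk1'
    have h6 : f (y k) ≤ f (y ⟨n+1, h⟩) := hanti.antitoneOn (yIcc _) (yIcc _) h5
    have h7 : 0 < f (y ⟨n+1, h⟩) := hfpos' _ (yIcc _)
    have h8 : f (z (n+1)) < f w := hanti hwI (hzI (n+1) hi1 hiμ) hw2
    have h9 : f (z (n+1)) = δ * f (x (n+2)) := hfz (n+1) hi1 hiμ
    have h10 : f w < δ * f (y ⟨n+1, h⟩) := by nlinarith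
    have h11 : f (x (n+2)) < f (y ⟨n+1, h⟩) := by nlinarith [hδ, lt_trans zero_lt_one hδ]
    by_contra hfin2
    push_neg at hfin2
    have h12 : f (y ⟨n+1, h⟩) ≤ f (x (n+2)) :=
      hanti.antitoneOn (hxI (n+2) (by omega) (by omega)) (yIcc _) hfin2
    linarith
  have P : ∀ n, ∀ (hn : n < μ), y ⟨n, hn⟩ ≤ x (n+1) := by
    intro n
    induction n with
    | zero => intro hn; rw [show (⟨0, hn⟩ : Fin μ) = ⟨0, hμ0⟩ from rfl, y0, hx1]
    | succ m ih =>
        intro hn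
        exact le_of_lt (K m hn (ih (by omega)))
  have hμ2 : μ - 2 + 1 < μ := by omega
  have hfinal := K (μ - 2) hμ2 (P (μ - 2) (by omega))
  rw [show μ - 2 + 2 = μ by omega, hxμ] at hfinal
  have hidx : (⟨μ - 2 + 1, hμ2⟩ : Fin μ) = ⟨μ - 1, hμ1⟩ := by
    apply Fin.ext; simp; omega
  rw [hidx, ylast] at hfinal
  exact absurd hfinal (lt_irrefl _)
end

section
/- Let f:[1,c]→[1,c] be f(x)=c/x with c>1, and let X={c^{(i−1)/(μ−1)} : i=1,…,μ} be the geometric point distribution. Then the multiplicative approximation ratio of X with respect to f equals exactly c^{1/(2μ−2)}. -/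
open Set Finset Real

theorem stmt3 (c : ℝ) (hc : 1 < c) (μ : ℕ) (hμ : 2 ≤ μ) :
    approxRatio (fun x => c / x) 1 c
      {y | ∃ i : ℕ, 1 ≤ i ∧ i ≤ μ ∧ y = c ^ (((i : ℝ) - 1) / ((μ : ℝ) - 1))}
      = c ^ ((1 : ℝ) / (2 * (μ : ℝ) - 2)) := by
  have hc0 : (0:ℝ) < c := lt_trans one_pos hc
  have hcne : c ≠ 1 := hc.ne'
  have hμ2 : (2:ℝ) ≤ (μ:ℝ) := by exact_mod_cast hμ
  set m : ℝ := (μ:ℝ) - 1 with hmdef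
  have hm1 : (1:ℝ) ≤ m := by simp only [hmdef]; linarith
  have hm0 : (0:ℝ) < m := lt_of_lt_of_le one_pos hm1
  set δ₀ : ℝ := c ^ ((1:ℝ)/(2*m)) with hδ₀def
  have hδ₀pos : 0 < δ₀ := Real.rpow_pos_of_pos hc0 _
  have hδ₀1 : 1 ≤ δ₀ := Real.one_le_rpow hc.le (by positivity)
  set X : Set ℝ := {y | ∃ i : ℕ, 1 ≤ i ∧ i ≤ μ ∧ y = c ^ (((i : ℝ) - 1) / m)} with hXdef
  -- δ₀ is a valid approximation ratio
  have hmem : IsApprox (fun x => c/x) 1 c X δ₀ := by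
    refine ⟨hδ₀1, ?_⟩
    intro x hx
    have hx1 : 1 ≤ x := hx.1
    have hx0 : 0 < x := lt_of_lt_of_le one_pos hx1
    set t : ℝ := Real.logb c x with htdef
    have ht0 : 0 ≤ t := Real.logb_nonneg hc hx1
    have ht1 : t ≤ 1 := by
      rw [htdef, Real.logb, div_le_one (Real.log_pos hc)]
      exact Real.log_le_log hx0 hx.2
    set k : ℕ := ⌊t * m + 1/2⌋₊ with hkdef
    have hk1 : (k:ℝ) ≤ t * m + 1/2 := Nat.floor_le (by positivity)
    have hk2 : t * m + 1/2 < (k:ℝ) + 1 := Nat.lt_floor_add_one _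
    have hkμ : k + 1 ≤ μ := by
      have hlt : (k:ℝ) < (μ:ℝ) := by
        calc (k:ℝ) ≤ t * m + 1/2 := hk1
          _ ≤ 1 * m + 1/2 := by nlinarith
          _ < (μ:ℝ) := by simp only [hmdef]; linarith
      exact_mod_cast Nat.succ_le_of_lt (by exact_mod_cast hlt)
    have hxeq : x = c ^ t := (Real.rpow_logb hc0 hcne hx0).symm
    refine ⟨c ^ ((k:ℝ)/m), ⟨k+1, Nat.le_add_left 1 k, hkμ, by push_cast; ring_nf⟩, ?_, ?_⟩
    · -- x ≤ δ₀ * c^(k/m)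
      have key1 : t ≤ 1/(2*m) + (k:ℝ)/m := by
        have h : t ≤ (1/2 + (k:ℝ))/m := by rw [le_div_iff₀ hm0]; linarith
        calc t ≤ (1/2 + (k:ℝ))/m := h
          _ = 1/(2*m) + (k:ℝ)/m := by field_simp
      rw [hxeq, hδ₀def, ← Real.rpow_add hc0]
      exact (Real.rpow_le_rpow_left_iff hc).mpr key1
    · -- c/x ≤ δ₀ * (c / c^(k/m))
      have key2 : (k:ℝ)/m ≤ 1/(2*m) + t := by
        have h : (k:ℝ)/m ≤ (1/2 + t*m)/m := by
          rw [div_le_div_iff₀ hm0 hm0]; nlinarith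
        calc (k:ℝ)/m ≤ (1/2 + t*m)/m := h
          _ = 1/(2*m) + t := by field_simp
      have e1 : c / x = c ^ ((1:ℝ) - t) := by
        rw [Real.rpow_sub hc0, Real.rpow_one, hxeq]
      have e2 : c / c ^ ((k:ℝ)/m) = c ^ ((1:ℝ) - (k:ℝ)/m) := by
        rw [Real.rpow_sub hc0, Real.rpow_one]
      simp only
      rw [e1, e2, hδ₀def, ← Real.rpow_add hc0]
      exact (Real.rpow_le_rpow_left_iff hc).mpr (by linarith)
  -- any valid ratio is at least δ₀
  have hlb : ∀ δ ∈ {δ : ℝ | IsApprox (fun x => c/x) 1 c X δ}, δ₀ ≤ δ := by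
    intro δ hδ
    obtain ⟨hδ1, h⟩ := hδ
    have hδpos : 0 < δ := lt_of_lt_of_le one_pos hδ1
    have hx₀mem : δ₀ ∈ Set.Icc (1:ℝ) c := by
      refine ⟨hδ₀1, ?_⟩
      calc δ₀ ≤ c ^ (1:ℝ) := by
            exact (Real.rpow_le_rpow_left_iff hc).mpr (by rw [div_le_one (by positivity)]; linarith)
        _ = c := Real.rpow_one c
    obtain ⟨y, hyX, hxy, hfxy⟩ := h δ₀ hx₀mem
    obtain ⟨i, hi1, hiμ, hyeq⟩ := hyX
    rcases eq_or_lt_of_le hi1 with h1 | h2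
    · -- i = 1, y = 1, so δ₀ ≤ δ * 1
      have hy1 : y = 1 := by
        rw [hyeq, ← h1]
        norm_num
      rw [hy1, mul_one] at hxy
      exact hxy
    · -- i ≥ 2
      have hi2 : (2:ℝ) ≤ (i:ℝ) := by exact_mod_cast h2
      have hy0 : 0 < y := by rw [hyeq]; exact Real.rpow_pos_of_pos hc0 _
      simp only at hfxy
      -- derive y ≤ δ * δ₀
      have hyδ : y ≤ δ * δ₀ := by
        rw [mul_div_assoc'] at hfxy
        rw [div_le_div_iff₀ hδ₀pos hy0] at hfxy
        nlinarith
      -- y ≥ δ₀^2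
      have hysq : δ₀ * δ₀ ≤ y := by
        have : δ₀ * δ₀ = c ^ ((1:ℝ)/(2*m) + (1:ℝ)/(2*m)) := by
          rw [Real.rpow_add hc0]
        rw [this, hyeq]
        apply (Real.rpow_le_rpow_left_iff hc).mpr
        have hsum : (1:ℝ)/(2*m) + 1/(2*m) = 1/m := by
          rw [← add_div, div_eq_div_iff (by positivity) hm0.ne']
          ring
        rw [hsum, div_le_div_iff₀ hm0 hm0]
        nlinarith
      nlinarith
  have hS : {δ : ℝ | IsApprox (fun x => c/x) 1 c X δ} =
      {δ : ℝ | IsApprox (fun x => c/x) 1 c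
        {y | ∃ i : ℕ, 1 ≤ i ∧ i ≤ μ ∧ y = c ^ (((i : ℝ) - 1) / ((μ : ℝ) - 1))} δ} := rfl
  have : approxRatio (fun x => c/x) 1 c
      {y | ∃ i : ℕ, 1 ≤ i ∧ i ≤ μ ∧ y = c ^ (((i : ℝ) - 1) / ((μ : ℝ) - 1))} = δ₀ := by
    rw [approxRatio, ← hS]
    exact le_antisymm (csInf_le ⟨δ₀, hlb⟩ hmem) (le_csInf ⟨δ₀, hmem⟩ hlb)
  rw [this, hδ₀def]
  congr 1
  simp only [hmdef]
  ring
end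

section
/- Let f:[1,c]→[1,c] be f(x)=c/x with c>1 and μ≥2. The set X={c^{(i−1)/(μ−1)} : i=1,…,μ} achieves the minimum approximation ratio c^{1/(2μ−2)} among all μ-point subsets of [1,c] containing both 1 and c; i.e., every μ-point set containing 1 and c has approximation ratio at least c^{1/(2μ−2)}. -/
open Set Finset Real

set_option maxHeartbeats 1600000 in
lemma key_lower (c : ℝ) (hc : 1 < c) (μ : ℕ) (hμ : 2 ≤ μ) (Y : Set ℝ)
    (hsub : Y ⊆ Set.Icc 1 c) (hfin : Y.Finite) (hcard : Y.ncard = μ)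
    (h1 : (1:ℝ) ∈ Y) (hcY : c ∈ Y) (δ : ℝ)
    (hδ : IsApprox (fun x => c / x) 1 c Y δ) :
    c ^ ((1:ℝ) / (2 * (μ:ℝ) - 2)) ≤ δ := by
  obtain ⟨hδ1, hcov⟩ := hδ
  have hc0 : (0:ℝ) < c := by linarith
  have hδ0 : (0:ℝ) < δ := by linarith
  have hμR : (2:ℝ) ≤ (μ:ℝ) := by exact_mod_cast hμ
  have hFcard : hfin.toFinset.card = μ := by
    rw [← Set.ncard_eq_toFinset_card Y hfin]; exact hcard
  obtain ⟨f, hmono, hmemY, hsurj⟩ :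
      ∃ f : Fin μ → ℝ, Monotone f ∧ (∀ k, f k ∈ Y) ∧ ∀ y ∈ Y, ∃ k, f k = y := by
    refine ⟨hfin.toFinset.orderEmbOfFin hFcard,
      (hfin.toFinset.orderEmbOfFin hFcard).monotone, ?_, ?_⟩
    · exact fun k => hfin.mem_toFinset.mp (hfin.toFinset.orderEmbOfFin_mem hFcard k)
    · intro y hy
      have : y ∈ Set.range (hfin.toFinset.orderEmbOfFin hFcard) := by
        rw [Finset.range_orderEmbOfFin]
        exact hfin.mem_toFinset.mpr hy
      exact this
  have hbnd : ∀ k, 1 ≤ f k ∧ f k ≤ c := fun k => hsub (hmemY k)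
  -- endpoints
  have hpos : 0 < μ := by omega
  obtain ⟨k1, hk1⟩ := hsurj 1 h1
  obtain ⟨kc, hkc⟩ := hsurj c hcY
  have hf0 : f ⟨0, hpos⟩ = 1 := by
    refine le_antisymm ?_ (hbnd _).1
    rw [← hk1]; exact hmono (Fin.le_def.mpr (Nat.zero_le _))
  have hflast : f ⟨μ - 1, by omega⟩ = c := by
    refine le_antisymm (hbnd _).2 ?_
    rw [← hkc]; exact hmono (Fin.le_def.mpr (by simp; omega))
  set g : ℕ → ℝ := fun i => if h : i < μ then f ⟨i, h⟩ else c with hg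
  have hg0 : g 0 = 1 := by simp only [hg, dif_pos hpos]; exact hf0
  have hglast : g (μ - 1) = c := by
    simp only [hg, dif_pos (show μ - 1 < μ by omega)]; exact hflast
  -- gap bound
  have hgap : ∀ i ∈ Finset.range (μ - 1),
      Real.log (g (i + 1)) - Real.log (g i) ≤ 2 * Real.log δ := by
    intro i hi
    rw [Finset.mem_range] at hi
    have hi1 : i < μ := by omega
    have hi2 : i + 1 < μ := by omega
    set a := f ⟨i, hi1⟩ with hadef
    set b := f ⟨i + 1, hi2⟩ with hbdef
    have hga : g i = a := by simp only [hg, dif_pos hi1]; rfl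
    have hgb : g (i + 1) = b := by simp only [hg, dif_pos hi2]; rfl
    have ha1 : 1 ≤ a := (hbnd _).1
    have hbc : b ≤ c := (hbnd _).2
    have hab : a ≤ b := hmono (by simp [Fin.mk_le_mk])
    have ha0 : 0 < a := by linarith
    have hb0 : 0 < b := by linarith
    set m := Real.sqrt (a * b) with hm
    have hm2 : m ^ 2 = a * b := Real.sq_sqrt (by positivity)
    have hm0 : 0 < m := Real.sqrt_pos.mpr (by positivity)
    have hm1 : 1 ≤ m := by
      rw [show (1:ℝ) = Real.sqrt 1 by simp]
      exact Real.sqrt_le_sqrt (by nlinarith)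
    have hmc : m ≤ c := by
      rw [show c = Real.sqrt (c * c) by rw [Real.sqrt_mul_self hc0.le]]
      exact Real.sqrt_le_sqrt (by nlinarith)
    obtain ⟨y, hyY, hy1, hy2⟩ := hcov m ⟨hm1, hmc⟩
    obtain ⟨hy1', hyc⟩ := hsub hyY
    have hy0 : 0 < y := by linarith
    -- from hy2 : c / m ≤ δ * (c / y) derive y ≤ δ * m
    have hyδm : y ≤ δ * m := by
      have h2 : c / m ≤ δ * c / y := by rw [mul_div_assoc]; exact hy2
      rw [div_le_div_iff₀ hm0 hy0] at h2
      nlinarith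
    -- key : b ≤ δ^2 * a
    have hkey : b ≤ δ ^ 2 * a := by
      obtain ⟨k, hk⟩ := hsurj y hyY
      rcases le_or_gt (k : ℕ) i with hki | hki
      · have hya : y ≤ a := by rw [← hk]; exact hmono (by simp [Fin.le_def, hki])
        have hma : m ≤ δ * a :=
          le_trans hy1 (mul_le_mul_of_nonneg_left hya hδ0.le)
        have hsq : a * b ≤ (δ * a) ^ 2 := by
          rw [← hm2]; exact pow_le_pow_left₀ hm0.le hma 2
        nlinarith [hsq, ha0, hb0]
      · have hby : b ≤ y := by
          rw [← hk]; exact hmono (by simp [Fin.le_def]; omega)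
        have hbm : b ≤ δ * m := le_trans hby hyδm
        have hsq : b ^ 2 ≤ (δ * m) ^ 2 := pow_le_pow_left₀ hb0.le hbm 2
        have hsq' : b ^ 2 ≤ δ ^ 2 * (a * b) := by
          calc b ^ 2 ≤ (δ * m) ^ 2 := hsq
            _ = δ ^ 2 * m ^ 2 := by ring
            _ = δ ^ 2 * (a * b) := by rw [hm2]
        nlinarith [hsq', hb0]
    rw [hga, hgb, sub_le_iff_le_add]
    calc Real.log b ≤ Real.log (δ ^ 2 * a) :=
          Real.log_le_log (by positivity) hkey
      _ = 2 * Real.log δ + Real.log a := by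
          rw [Real.log_mul (by positivity) (by positivity), Real.log_pow]
          push_cast; ring
  have hsum := Finset.sum_range_sub (fun i => Real.log (g i)) (μ - 1)
  have hsumle : ∑ i ∈ Finset.range (μ - 1),
      (Real.log (g (i + 1)) - Real.log (g i)) ≤ (μ - 1 : ℕ) * (2 * Real.log δ) := by
    calc ∑ i ∈ Finset.range (μ - 1), (Real.log (g (i + 1)) - Real.log (g i))
        ≤ ∑ _i ∈ Finset.range (μ - 1), 2 * Real.log δ := Finset.sum_le_sum hgap
      _ = (μ - 1 : ℕ) * (2 * Real.log δ) := by
          rw [Finset.sum_const, Finset.card_range]; simp [nsmul_eq_mul]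
  rw [hsum, hglast, hg0, Real.log_one, sub_zero] at hsumle
  have hcast : ((μ - 1 : ℕ) : ℝ) = (μ:ℝ) - 1 := by
    push_cast [Nat.cast_sub (by omega : 1 ≤ μ)]; ring
  have hlog : Real.log c ≤ (2 * (μ:ℝ) - 2) * Real.log δ := by
    rw [hcast] at hsumle; linarith
  have hden : (0:ℝ) < 2 * (μ:ℝ) - 2 := by linarith
  rw [Real.rpow_def_of_pos hc0, ← Real.exp_log hδ0]
  apply Real.exp_le_exp.mpr
  rw [mul_one_div, div_le_iff₀ hden]
  linarith [hlog]


lemma key_upper (c : ℝ) (hc : 1 < c) (μ : ℕ) (hμ : 2 ≤ μ) :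
    (1 ≤ c ^ ((1:ℝ) / (2 * (μ:ℝ) - 2))) ∧
    ∀ x ∈ Set.Icc (1:ℝ) c, ∃ y ∈ {y | ∃ i : ℕ, 1 ≤ i ∧ i ≤ μ ∧
        y = c ^ (((i : ℝ) - 1) / ((μ : ℝ) - 1))},
      x ≤ c ^ ((1:ℝ) / (2 * (μ:ℝ) - 2)) * y ∧
      c / x ≤ c ^ ((1:ℝ) / (2 * (μ:ℝ) - 2)) * (c / y) := by
  have hc0 : (0:ℝ) < c := by linarith
  have hμR : (2:ℝ) ≤ (μ:ℝ) := by exact_mod_cast hμ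
  obtain ⟨M, hM⟩ : ∃ M : ℝ, M = (μ:ℝ) - 1 := ⟨_, rfl⟩
  have hM1 : (1:ℝ) ≤ M := by rw [hM]; linarith
  have hM0 : (0:ℝ) < M := by linarith
  have hexp : (1:ℝ) / (2 * (μ:ℝ) - 2) = 1 / (2 * M) := by rw [hM]; ring_nf
  have hδ1 : 1 ≤ c ^ ((1:ℝ) / (2 * (μ:ℝ) - 2)) := by
    have h0e : (0:ℝ) ≤ 1 / (2 * (μ:ℝ) - 2) := by
      rw [hexp]; exact div_nonneg (by norm_num) (by linarith)
    have h := Real.rpow_le_rpow_of_exponent_le hc.le h0e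
    rwa [Real.rpow_zero] at h
  refine ⟨hδ1, ?_⟩
  rintro x ⟨hx1, hxc⟩
  have hx0 : (0:ℝ) < x := by linarith
  obtain ⟨t, ht⟩ : ∃ t : ℝ, t = Real.logb c x := ⟨_, rfl⟩
  have ht0 : 0 ≤ t := ht ▸ Real.logb_nonneg hc hx1
  have ht1 : t ≤ 1 := by
    rw [ht, ← Real.logb_self_eq_one hc]
    exact (Real.logb_le_logb hc hx0 hc0).mpr hxc
  have hxt : x = c ^ t := by rw [ht]; exact (Real.rpow_logb hc0 (by linarith) hx0).symm
  obtain ⟨n, hn⟩ : ∃ n : ℤ, n = round (t * M) := ⟨_, rfl⟩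
  have habs : |t * M - (n:ℝ)| ≤ 1 / 2 := hn ▸ abs_sub_round (t * M)
  have hn0 : 0 ≤ n := by
    rw [hn, round_eq]
    exact Int.floor_nonneg.mpr (by positivity)
  have hnM : (n:ℝ) ≤ M := by
    have h1 : t * M ≤ M := by nlinarith
    have h3 : round (t * M) ≤ round M := by
      rw [round_eq, round_eq]
      exact Int.floor_le_floor (by linarith)
    have h2 : round M = (μ:ℤ) - 1 := by
      rw [hM, show ((μ:ℝ) - 1) = (((μ:ℤ) - 1 : ℤ) : ℝ) by push_cast; ring, round_intCast]
    rw [← hn, h2] at h3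
    have h4 : (n:ℝ) ≤ (((μ:ℤ) - 1 : ℤ) : ℝ) := by exact_mod_cast h3
    rw [hM]; push_cast at h4 ⊢; linarith
  have habs' := abs_le.mp habs
  have hkey1 : t ≤ (n:ℝ) / M + 1 / (2 * M) := by
    rw [← sub_nonneg, show (n:ℝ) / M + 1 / (2 * M) - t = ((n:ℝ) + 1/2 - t * M) / M by
      field_simp]
    exact div_nonneg (by linarith [habs'.2]) hM0.le
  have hkey2 : (n:ℝ) / M - 1 / (2 * M) ≤ t := by
    rw [← sub_nonneg, show t - ((n:ℝ) / M - 1 / (2 * M)) = (t * M - (n:ℝ) + 1/2) / M by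
      field_simp; ring]
    exact div_nonneg (by linarith [habs'.1]) hM0.le
  refine ⟨c ^ ((n:ℝ) / M), ⟨n.toNat + 1, by omega, ?_, ?_⟩, ?_, ?_⟩
  · have h5 : n ≤ (μ:ℤ) - 1 := by
      have : (n:ℝ) ≤ ((μ:ℝ)) - 1 := by rw [hM] at hnM; exact hnM
      exact_mod_cast this
    omega
  · have hexp2 : ((((n.toNat + 1 : ℕ)) : ℝ) - 1) / ((μ:ℝ) - 1) = (n:ℝ) / M := by
      have hnat : ((n.toNat : ℕ) : ℝ) = (n:ℝ) := by exact_mod_cast Int.toNat_of_nonneg hn0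
      rw [hM]; push_cast; rw [hnat]; ring
    rw [hexp2]
  · -- x ≤ δ * c^(n/M)
    rw [hxt, hexp, ← Real.rpow_add hc0]
    apply Real.rpow_le_rpow_of_exponent_le hc.le
    linarith
  · -- c / x ≤ δ * (c / c^(n/M))
    have hcx : c / x = c ^ (1 - t) := by
      rw [hxt, Real.rpow_sub hc0, Real.rpow_one]
    have hcy : c / c ^ ((n:ℝ) / M) = c ^ (1 - (n:ℝ) / M) := by
      rw [Real.rpow_sub hc0, Real.rpow_one]
    rw [hcx, hcy, hexp, ← Real.rpow_add hc0]
    apply Real.rpow_le_rpow_of_exponent_le hc.le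
    linarith


lemma X_facts (c : ℝ) (hc : 1 < c) (μ : ℕ) (hμ : 2 ≤ μ) :
    ({y | ∃ i : ℕ, 1 ≤ i ∧ i ≤ μ ∧ y = c ^ (((i : ℝ) - 1) / ((μ : ℝ) - 1))} : Set ℝ)
      ⊆ Set.Icc 1 c ∧
    ({y | ∃ i : ℕ, 1 ≤ i ∧ i ≤ μ ∧ y = c ^ (((i : ℝ) - 1) / ((μ : ℝ) - 1))} : Set ℝ).Finite ∧
    ({y | ∃ i : ℕ, 1 ≤ i ∧ i ≤ μ ∧ y = c ^ (((i : ℝ) - 1) / ((μ : ℝ) - 1))} : Set ℝ).ncard = μ ∧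
    (1:ℝ) ∈ ({y | ∃ i : ℕ, 1 ≤ i ∧ i ≤ μ ∧ y = c ^ (((i : ℝ) - 1) / ((μ : ℝ) - 1))} : Set ℝ) ∧
    c ∈ ({y | ∃ i : ℕ, 1 ≤ i ∧ i ≤ μ ∧ y = c ^ (((i : ℝ) - 1) / ((μ : ℝ) - 1))} : Set ℝ) := by
  have hc0 : (0:ℝ) < c := by linarith
  have hμR : (2:ℝ) ≤ (μ:ℝ) := by exact_mod_cast hμ
  have hM0 : (0:ℝ) < (μ:ℝ) - 1 := by linarith
  set X : Set ℝ := {y | ∃ i : ℕ, 1 ≤ i ∧ i ≤ μ ∧ y = c ^ (((i : ℝ) - 1) / ((μ : ℝ) - 1))}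
    with hX
  have hXeq : X = ↑((Finset.Icc 1 μ).image
      (fun i : ℕ => c ^ (((i : ℝ) - 1) / ((μ : ℝ) - 1)))) := by
    ext y
    simp only [hX, Set.mem_setOf_eq, Finset.coe_image, Set.mem_image, Finset.mem_coe,
      Finset.mem_Icc]
    constructor
    · rintro ⟨i, h1, h2, h3⟩; exact ⟨i, ⟨h1, h2⟩, h3.symm⟩
    · rintro ⟨i, ⟨h1, h2⟩, h3⟩; exact ⟨i, h1, h2, h3.symm⟩
  have hinj : Set.InjOn (fun i : ℕ => c ^ (((i : ℝ) - 1) / ((μ : ℝ) - 1)))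
      ↑(Finset.Icc 1 μ) := by
    intro i _ j _ hij
    simp only at hij
    have hmono : StrictMono (fun s : ℝ => c ^ s) := fun s s' hss' =>
      Real.rpow_lt_rpow_of_exponent_lt hc hss'
    have h2 := hmono.injective hij
    have hne : ((μ:ℝ) - 1) ≠ 0 := hM0.ne'
    field_simp at h2
    exact_mod_cast (show (i:ℝ) = j by linarith)
  refine ⟨?_, ?_, ?_, ?_, ?_⟩
  · rintro y ⟨i, h1, h2, rfl⟩
    have hi1 : (1:ℝ) ≤ (i:ℝ) := by exact_mod_cast h1
    have hiμ : (i:ℝ) ≤ (μ:ℝ) := by exact_mod_cast h2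
    constructor
    · have h := Real.rpow_le_rpow_of_exponent_le hc.le
        (show (0:ℝ) ≤ ((i:ℝ) - 1) / ((μ:ℝ) - 1) from div_nonneg (by linarith) hM0.le)
      rwa [Real.rpow_zero] at h
    · have h := Real.rpow_le_rpow_of_exponent_le hc.le
        (show ((i:ℝ) - 1) / ((μ:ℝ) - 1) ≤ (1:ℝ) from by rw [div_le_one hM0]; linarith)
      rwa [Real.rpow_one] at h
  · rw [hXeq]; exact (Finset.image _ _).finite_toSet
  · rw [hXeq, Set.ncard_coe_finset, Finset.card_image_of_injOn hinj]
    simp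
  · exact ⟨1, le_refl 1, by omega, by simp⟩
  · refine ⟨μ, by omega, le_refl μ, ?_⟩
    rw [show ((μ:ℝ) - 1) / ((μ:ℝ) - 1) = 1 by field_simp, Real.rpow_one]

theorem stmt4 (c : ℝ) (hc : 1 < c) (μ : ℕ) (hμ : 2 ≤ μ) :
    approxRatio (fun x => c / x) 1 c
      {y | ∃ i : ℕ, 1 ≤ i ∧ i ≤ μ ∧ y = c ^ (((i : ℝ) - 1) / ((μ : ℝ) - 1))}
      = c ^ ((1 : ℝ) / (2 * (μ : ℝ) - 2)) ∧
    ∀ Y : Set ℝ, Y ⊆ Set.Icc 1 c → Y.Finite → Y.ncard = μ →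
      (1 : ℝ) ∈ Y → c ∈ Y →
      c ^ ((1 : ℝ) / (2 * (μ : ℝ) - 2)) ≤ approxRatio (fun x => c / x) 1 c Y := by
  have hc0 : (0:ℝ) < c := by linarith
  obtain ⟨hXsub, hXfin, hXcard, hX1, hXc⟩ := X_facts c hc μ hμ
  obtain ⟨hδ1, hcov⟩ := key_upper c hc μ hμ
  have hup : IsApprox (fun x => c / x) 1 c
      {y | ∃ i : ℕ, 1 ≤ i ∧ i ≤ μ ∧ y = c ^ (((i : ℝ) - 1) / ((μ : ℝ) - 1))}
      (c ^ ((1 : ℝ) / (2 * (μ : ℝ) - 2))) := ⟨hδ1, hcov⟩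
  have htriv : ∀ Y : Set ℝ, (1:ℝ) ∈ Y → IsApprox (fun x => c / x) 1 c Y c := by
    intro Y h1
    refine ⟨hc.le, ?_⟩
    rintro x ⟨hx1, hxc⟩
    refine ⟨1, h1, by linarith, ?_⟩
    simp only
    have h2 : c / x ≤ c := div_le_self hc0.le hx1
    have h3 : c / 1 = c := by norm_num
    rw [h3]
    nlinarith
  constructor
  · apply le_antisymm
    · apply csInf_le
      · exact ⟨c ^ ((1 : ℝ) / (2 * (μ : ℝ) - 2)),
          fun δ hδ => key_lower c hc μ hμ _ hXsub hXfin hXcard hX1 hXc δ hδ⟩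
      · exact hup
    · exact le_csInf ⟨_, hup⟩
        (fun δ hδ => key_lower c hc μ hμ _ hXsub hXfin hXcard hX1 hXc δ hδ)
  · intro Y hsub hfin hcard h1 hcY
    exact le_csInf ⟨c, htriv Y h1⟩
      (fun δ hδ => key_lower c hc μ hμ Y hsub hfin hcard h1 hcY δ hδ)
end

section
/- Let f:[x_min,x_max]→ℝ be a continuous strictly decreasing Pareto front with x_min>0 and f(x_max)>0, and X={x_1,…,x_μ} with x_1<x_2<⋯<x_μ (extreme points not required to belong to X). Suppose there exist δ>1 and z_1,…,z_{μ−1} with x_i<z_i<x_{i+1}, such that z_i=δ·x_i for 1≤i≤μ (with z_μ:=x_max) and f(z_i)=δ·f(x_{i+1}) for 0≤i<μ (with z_0:=x_min). Then X is the unique μ-point subset of [x_min,x_max] minimizing the approximation ratio, and its approximation ratio equals δ. -/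
open Set Finset Real

lemma adjLtAux {u : ℕ → ℝ} {lo hi : ℕ} (h : ∀ i, lo ≤ i → i < hi → u i < u (i+1)) :
    ∀ {i j : ℕ}, lo ≤ i → i < j → j ≤ hi → u i < u j := by
  intro i j hlo hij hhi
  induction j, hij using Nat.le_induction with
  | base => exact h i hlo (by omega)
  | succ n hn ih => exact (ih (by omega)).trans (h n (by omega) (by omega))

lemma adjLeAux {u : ℕ → ℝ} {lo hi : ℕ} (h : ∀ i, lo ≤ i → i < hi → u i < u (i+1)) :
    ∀ {i j : ℕ}, lo ≤ i → i ≤ j → j ≤ hi → u i ≤ u j := by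
  intro i j hlo hij hhi
  rcases eq_or_lt_of_le hij with rfl | h'
  · exact le_rfl
  · exact (adjLtAux h hlo h' hhi).le

theorem stmt5 (xmin xmax : ℝ) (f : ℝ → ℝ) (μ : ℕ) (hμ : 1 ≤ μ)
    (hxmin : 0 < xmin) (hxx : xmin < xmax)
    (hcont : ContinuousOn f (Set.Icc xmin xmax))
    (hanti : StrictAntiOn f (Set.Icc xmin xmax))
    (hfpos : 0 < f xmax)
    (x : ℕ → ℝ) (hmono : ∀ i, 1 ≤ i → i < μ → x i < x (i + 1))
    (hxmem : ∀ i, 1 ≤ i → i ≤ μ → x i ∈ Set.Icc xmin xmax)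
    (δ : ℝ) (hδ : 1 < δ) (z : ℕ → ℝ)
    (hz0 : z 0 = xmin) (hzμ : z μ = xmax)
    (hbetween : ∀ i, 1 ≤ i → i < μ → x i < z i ∧ z i < x (i + 1))
    (hz1 : ∀ i, 1 ≤ i → i ≤ μ → z i = δ * x i)
    (hz2 : ∀ i, i < μ → f (z i) = δ * f (x (i + 1))) :
    approxRatio f xmin xmax {y | ∃ i, 1 ≤ i ∧ i ≤ μ ∧ y = x i} = δ ∧
    (∀ Y : Set ℝ, Y ⊆ Set.Icc xmin xmax → Y.Finite → Y.ncard = μ →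
      approxRatio f xmin xmax {y | ∃ i, 1 ≤ i ∧ i ≤ μ ∧ y = x i} ≤
        approxRatio f xmin xmax Y) ∧
    (∀ Y : Set ℝ, Y ⊆ Set.Icc xmin xmax → Y.Finite → Y.ncard = μ →
      approxRatio f xmin xmax Y ≤ δ → Y = {y | ∃ i, 1 ≤ i ∧ i ≤ μ ∧ y = x i}) := by
  set X : Set ℝ := {y | ∃ i, 1 ≤ i ∧ i ≤ μ ∧ y = x i} with hXdef
  have hδ0 : (0:ℝ) < δ := lt_trans one_pos hδ
  -- basic monotonicity of x
  have hxlt : ∀ {i j : ℕ}, 1 ≤ i → i < j → j ≤ μ → x i < x j := fun hi hij hj =>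
    adjLtAux hmono hi hij hj
  have hxle : ∀ {i j : ℕ}, 1 ≤ i → i ≤ j → j ≤ μ → x i ≤ x j := fun hi hij hj =>
    adjLeAux hmono hi hij hj
  have hxpos : ∀ i, 1 ≤ i → i ≤ μ → 0 < x i := fun i h1 h2 =>
    lt_of_lt_of_le hxmin (hxmem i h1 h2).1
  have hantile : AntitoneOn f (Set.Icc xmin xmax) := hanti.antitoneOn
  have hfposIcc : ∀ w ∈ Set.Icc xmin xmax, 0 < f w := by
    intro w hw
    have : f xmax ≤ f w := hantile hw (Set.right_mem_Icc.2 hxx.le) hw.2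
    linarith
  -- x i < z i
  have hzx : ∀ i, 1 ≤ i → i ≤ μ → x i < z i := by
    intro i h1 h2
    rw [hz1 i h1 h2]
    nlinarith [hxpos i h1 h2]
  have hzmem : ∀ i, i ≤ μ → z i ∈ Set.Icc xmin xmax := by
    intro i hi
    rcases Nat.eq_zero_or_pos i with rfl | h1
    · rw [hz0]; exact Set.left_mem_Icc.2 hxx.le
    constructor
    · exact le_trans (hxmem i h1 hi).1 (hzx i h1 hi).le
    · rcases eq_or_lt_of_le hi with rfl | hlt
      · rw [hzμ]
      · exact (hbetween i h1 hlt).2.le.trans (hxmem (i+1) (by omega) hlt).2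
  -- z adjacent increasing
  have hzadj : ∀ i, i < μ → z i < z (i+1) := by
    intro i hi
    rcases Nat.eq_zero_or_pos i with rfl | h1
    · rw [hz0]
      exact lt_of_le_of_lt (hxmem 1 le_rfl hμ).1 (hzx 1 le_rfl hμ)
    · exact lt_trans (hbetween i h1 hi).2 (hzx (i+1) (by omega) hi)
  have hzle : ∀ {i j : ℕ}, i ≤ j → j ≤ μ → z i ≤ z j := fun hij hj =>
    adjLeAux (lo := 0) (fun i _ hi => hzadj i hi) (Nat.zero_le _) hij hj
  -- X as a finset
  have hXeq : X = ↑((Finset.Icc 1 μ).image x) := by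
    ext w
    simp only [hXdef, Set.mem_setOf_eq, Finset.coe_image, Set.mem_image, Finset.mem_coe,
      Finset.mem_Icc]
    constructor
    · rintro ⟨i, h1, h2, rfl⟩; exact ⟨i, ⟨h1, h2⟩, rfl⟩
    · rintro ⟨i, ⟨h1, h2⟩, rfl⟩; exact ⟨i, h1, h2, rfl⟩
  have hXfin : X.Finite := by rw [hXeq]; exact (Finset.finite_toSet _)
  have hXinj : Set.InjOn x ↑(Finset.Icc 1 μ) := by
    intro a ha b hb hab
    simp only [Finset.coe_Icc, Set.mem_Icc] at ha hb
    by_contra hne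
    rcases lt_or_gt_of_ne hne with h | h
    · exact absurd hab (ne_of_lt (hxlt ha.1 h hb.2))
    · exact absurd hab.symm (ne_of_lt (hxlt hb.1 h ha.2))
  have hXcard : X.ncard = μ := by
    rw [hXeq, Set.ncard_coe_finset, Finset.card_image_of_injOn hXinj, Nat.card_Icc]
    omega
  have hXsub : X ⊆ Set.Icc xmin xmax := by
    rintro w ⟨i, h1, h2, rfl⟩
    exact hxmem i h1 h2
  -- X is a δ-approximation
  have hApproxX : IsApprox f xmin xmax X δ := by
    refine ⟨hδ.le, ?_⟩
    intro w hw
    have hcov : ∀ k, 1 ≤ k → k ≤ μ → w ≤ z k →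
        ∃ i, 1 ≤ i ∧ i ≤ k ∧ z (i-1) ≤ w ∧ w ≤ z i := by
      intro k
      induction k with
      | zero => omega
      | succ n ih =>
        intro _ hk hwk
        rcases Nat.eq_zero_or_pos n with rfl | h1
        · exact ⟨1, le_rfl, le_rfl, by simpa [hz0] using hw.1, hwk⟩
        · by_cases hwn : w ≤ z n
          · obtain ⟨i, hi1, hi2, hl, hr⟩ := ih h1 (by omega) hwn
            exact ⟨i, hi1, by omega, hl, hr⟩
          · exact ⟨n+1, by omega, le_rfl, by simpa using (le_of_not_ge hwn), hwk⟩
    obtain ⟨i, hi1, hiμ, hl, hr⟩ := hcov μ hμ le_rfl (by rw [hzμ]; exact hw.2)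
    refine ⟨x i, ⟨i, hi1, hiμ, rfl⟩, ?_, ?_⟩
    · calc w ≤ z i := hr
        _ = δ * x i := hz1 i hi1 hiμ
    · have h1 : f w ≤ f (z (i-1)) :=
        hantile (hzmem (i-1) (by omega)) hw hl
      have h2 : f (z (i-1)) = δ * f (x i) := by
        have := hz2 (i-1) (by omega)
        rwa [show i - 1 + 1 = i by omega] at this
      linarith
  -- the approx-ratio set is nonempty for any nonempty Y ⊆ Icc
  have hSne : ∀ Y : Set ℝ, Y ⊆ Set.Icc xmin xmax → Y.Nonempty →
      ∃ d, IsApprox f xmin xmax Y d := by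
    intro Y hsub ⟨y₀, hy₀⟩
    have hy₀m := hsub hy₀
    have hy₀pos : 0 < y₀ := lt_of_lt_of_le hxmin hy₀m.1
    have hfy₀pos : 0 < f y₀ := hfposIcc y₀ hy₀m
    refine ⟨max 1 (max (xmax / y₀) (f xmin / f y₀)), ?_, ?_⟩
    · exact le_max_left _ _
    · intro w hw
      refine ⟨y₀, hy₀, ?_, ?_⟩
      · have h1 : xmax / y₀ ≤ max 1 (max (xmax / y₀) (f xmin / f y₀)) :=
          le_trans (le_max_left _ _) (le_max_right _ _)
        have : xmax ≤ max 1 (max (xmax / y₀) (f xmin / f y₀)) * y₀ := by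
          rw [← div_le_iff₀ hy₀pos] at *
          exact h1
        linarith [hw.2]
      · have h1 : f xmin / f y₀ ≤ max 1 (max (xmax / y₀) (f xmin / f y₀)) :=
          le_trans (le_max_right _ _) (le_max_right _ _)
        have h2 : f xmin ≤ max 1 (max (xmax / y₀) (f xmin / f y₀)) * f y₀ := by
          rw [← div_le_iff₀ hfy₀pos]
          exact h1
        have h3 : f w ≤ f xmin := hantile (Set.left_mem_Icc.2 hxx.le) hw hw.1
        linarith
  -- lower bound: any δ-approximation by a μ-point set has ratio ≥ δ
  have hlowY : ∀ Y : Set ℝ, Y ⊆ Set.Icc xmin xmax → Y.Finite → Y.ncard = μ →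
      ∀ d, IsApprox f xmin xmax Y d → δ ≤ d := by
    intro Y hsub hfin hcard d hd
    by_contra hcon
    push_neg at hcon
    have hd1 : (1:ℝ) ≤ d := hd.1
    have hp : ∀ i, ∃ y, i ≤ μ → y ∈ Y ∧ (1 ≤ i → x i < y) ∧ (i < μ → y < x (i+1)) := by
      intro i
      by_cases hi : i ≤ μ
      · obtain ⟨y, hyY, h1, h2⟩ := hd.2 (z i) (hzmem i hi)
        have hym := hsub hyY
        have hypos : 0 < y := lt_of_lt_of_le hxmin hym.1
        have hfypos : 0 < f y := hfposIcc y hym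
        refine ⟨y, fun _ => ⟨hyY, ?_, ?_⟩⟩
        · intro h1i
          have : δ * x i ≤ d * y := by rw [← hz1 i h1i hi]; exact h1
          have : d * y < δ * y := by nlinarith
          nlinarith
        · intro hiμ
          have : δ * f (x (i+1)) ≤ d * f y := by rw [← hz2 i hiμ]; exact h2
          have hfx1 : 0 < f (x (i+1)) := hfposIcc _ (hxmem (i+1) (by omega) hiμ)
          have hlt : f (x (i+1)) < f y := by nlinarith
          by_contra hge
          push_neg at hge
          rcases eq_or_lt_of_le hge with heq | hgt
          · rw [heq] at hlt; linarith
          · exact absurd hlt (not_lt.2 (hanti (hxmem (i+1) (by omega) hiμ) hym hgt).le)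
      · exact ⟨0, fun h => absurd h hi⟩
    choose p hp using hp
    have hpadj : ∀ i, i < μ → p i < p (i+1) := by
      intro i hi
      have h1 := (hp i (by omega)).2.2 hi
      have h2 := (hp (i+1) hi).2.1 (by omega)
      linarith
    have hpinj : Set.InjOn p ↑(Finset.range (μ+1)) := by
      intro a ha b hb hab
      simp only [Finset.coe_range, Set.mem_Iio] at ha hb
      by_contra hne
      rcases lt_or_gt_of_ne hne with h | h
      · exact absurd hab (ne_of_lt (adjLtAux (lo := 0) (fun i _ hi => hpadj i hi)
          (Nat.zero_le _) h (by omega)))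
      · exact absurd hab.symm (ne_of_lt (adjLtAux (lo := 0) (fun i _ hi => hpadj i hi)
          (Nat.zero_le _) h (by omega)))
    have hGsub : (Finset.range (μ+1)).image p ⊆ hfin.toFinset := by
      intro w hw
      simp only [Finset.mem_image, Finset.mem_range] at hw
      obtain ⟨j, hj, rfl⟩ := hw
      exact hfin.mem_toFinset.2 (hp j (by omega)).1
    have hcard1 : ((Finset.range (μ+1)).image p).card = μ + 1 := by
      rw [Finset.card_image_of_injOn hpinj, Finset.card_range]
    have hcard2 : hfin.toFinset.card = μ := by
      rw [← Set.ncard_eq_toFinset_card Y hfin]; exact hcard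
    have := Finset.card_le_card hGsub
    omega
  -- part 1
  have h1 : approxRatio f xmin xmax X = δ := by
    apply le_antisymm
    · exact csInf_le ⟨1, fun d hd => hd.1⟩ (by exact hApproxX)
    · exact le_csInf ⟨δ, by exact hApproxX⟩ (fun d hd => hlowY X hXsub hXfin hXcard d hd)
  refine ⟨h1, ?_, ?_⟩
  · -- part 2
    intro Y hsub hfin hcard
    rw [h1]
    have hYne : Y.Nonempty := Set.nonempty_of_ncard_ne_zero (by omega)
    obtain ⟨d0, hd0⟩ := hSne Y hsub hYne
    exact le_csInf ⟨d0, by exact hd0⟩ (fun d hd => hlowY Y hsub hfin hcard d hd)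
  · -- part 3: uniqueness
    intro Y hsub hfin hcard hle
    have hYne : Y.Nonempty := Set.nonempty_of_ncard_ne_zero (by omega)
    obtain ⟨d0, hd0⟩ := hSne Y hsub hYne
    have hA : IsApprox f xmin xmax Y δ := by
      refine ⟨hδ.le, ?_⟩
      intro w hw
      have hwpos : 0 < w := lt_of_lt_of_le hxmin hw.1
      obtain ⟨ys, hysT, hysmin⟩ := hfin.toFinset.exists_min_image
        (fun y => max (w / y) (f w / f y)) (by
          rw [Set.Finite.toFinset_nonempty]; exact hYne)
      have hysY : ys ∈ Y := hfin.mem_toFinset.1 hysT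
      have hysm := hsub hysY
      have hyspos : 0 < ys := lt_of_lt_of_le hxmin hysm.1
      have hfyspos : 0 < f ys := hfposIcc ys hysm
      have hlb : ∀ d ∈ {d : ℝ | IsApprox f xmin xmax Y d},
          max (w / ys) (f w / f ys) ≤ d := by
        intro d hd
        obtain ⟨y, hyY, hy1, hy2⟩ := hd.2 w hw
        have hym := hsub hyY
        have hypos : 0 < y := lt_of_lt_of_le hxmin hym.1
        have hfypos : 0 < f y := hfposIcc y hym
        refine le_trans (hysmin y (hfin.mem_toFinset.2 hyY)) (max_le ?_ ?_)
        · rw [div_le_iff₀ hypos]; linarith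
        · rw [div_le_iff₀ hfypos]; linarith
      have hmδ : max (w / ys) (f w / f ys) ≤ δ :=
        le_trans (le_csInf ⟨d0, by exact hd0⟩ hlb) hle
      refine ⟨ys, hysY, ?_, ?_⟩
      · have := le_trans (le_max_left (w / ys) (f w / f ys)) hmδ
        rwa [div_le_iff₀ hyspos] at this
      · have := le_trans (le_max_right (w / ys) (f w / f ys)) hmδ
        rwa [div_le_iff₀ hfyspos] at this
    -- fact F0 : some y ≤ x 1
    have hF0 : ∃ y ∈ Y, y ≤ x 1 := by
      obtain ⟨y, hyY, hy1, hy2⟩ := hA.2 xmin (Set.left_mem_Icc.2 hxx.le)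
      have h2 : δ * f (x 1) ≤ δ * f y := by
        rw [← hz2 0 (by omega)]; rw [hz0]; simpa using hy2
      have h3 : f (x 1) ≤ f y := le_of_mul_le_mul_left h2 hδ0
      refine ⟨y, hyY, ?_⟩
      by_contra hgt
      push_neg at hgt
      exact absurd h3 (not_le.2 (hanti (hxmem 1 le_rfl hμ) (hsub hyY) hgt))
    -- fact Fy : covering of z i
    have hFy : ∀ i, 1 ≤ i → i ≤ μ → ∃ y ∈ Y, x i ≤ y ∧ (i < μ → y ≤ x (i+1)) := by
      intro i h1 h2
      obtain ⟨y, hyY, hy1, hy2⟩ := hA.2 (z i) (hzmem i h2)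
      have hym := hsub hyY
      refine ⟨y, hyY, ?_, ?_⟩
      · have : δ * x i ≤ δ * y := by rw [← hz1 i h1 h2]; exact hy1
        exact le_of_mul_le_mul_left this hδ0
      · intro hiμ
        have : δ * f (x (i+1)) ≤ δ * f y := by rw [← hz2 i hiμ]; exact hy2
        have h3 : f (x (i+1)) ≤ f y := le_of_mul_le_mul_left this hδ0
        by_contra hgt
        push_neg at hgt
        exact absurd h3 (not_le.2 (hanti (hxmem (i+1) (by omega) hiμ) hym hgt))
    -- fact Fv : some y in [x i, x (i+1))
    have hFv : ∀ i, 1 ≤ i → i < μ → ∃ y ∈ Y, x i ≤ y ∧ y < x (i+1) := by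
      intro i h1 h2
      by_contra hcon
      push_neg at hcon
      -- hcon : ∀ y ∈ Y, x i ≤ y → x (i+1) ≤ y
      set F : Finset ℝ :=
        insert (x i) ((hfin.toFinset.filter (fun y => y < x i)).image (fun y => δ * y))
        with hF
      have hFne : F.Nonempty := ⟨x i, Finset.mem_insert_self _ _⟩
      set M := F.max' hFne with hM
      have hMlt : M < z i := by
        apply Finset.max'_lt_iff F hFne |>.2
        intro a ha
        rw [hF] at ha
        rcases Finset.mem_insert.1 ha with rfl | ha
        · exact hzx i h1 (by omega)
        · obtain ⟨y, hy, rfl⟩ := Finset.mem_image.1 ha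
          have := (Finset.mem_filter.1 hy).2
          rw [hz1 i h1 (by omega)]
          nlinarith
      have hMxi : x i ≤ M := Finset.le_max' F _ (Finset.mem_insert_self _ _)
      set w := (M + z i) / 2 with hw
      have hw1 : M < w := by rw [hw]; linarith
      have hw2 : w < z i := by rw [hw]; linarith
      have hwmem : w ∈ Set.Icc xmin xmax := by
        constructor
        · linarith [(hxmem i h1 (by omega)).1]
        · linarith [(hzmem i (by omega)).2]
      obtain ⟨y, hyY, hy1, hy2⟩ := hA.2 w hwmem
      by_cases hyx : y < x i
      · have hmem : δ * y ∈ F := by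
          rw [hF]
          exact Finset.mem_insert_of_mem (Finset.mem_image.2
            ⟨y, Finset.mem_filter.2 ⟨hfin.mem_toFinset.2 hyY, hyx⟩, rfl⟩)
        have := Finset.le_max' F _ hmem
        linarith
      · have hge : x (i+1) ≤ y := hcon y hyY (not_lt.1 hyx)
        have hym := hsub hyY
        have hfle : f y ≤ f (x (i+1)) := hantile (hxmem (i+1) (by omega) h2) hym hge
        have hzw : f (z i) < f w := hanti hwmem (hzmem i (by omega)) hw2
        have := hz2 i h2
        nlinarith
    -- fact Fw : some y in (x i, x (i+1)]
    have hFw : ∀ i, 1 ≤ i → i < μ → ∃ y ∈ Y, x i < y ∧ y ≤ x (i+1) := by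
      intro i h1 h2
      by_contra hcon
      push_neg at hcon
      -- hcon : ∀ y ∈ Y, x i < y → x (i+1) < y
      set F : Finset ℝ :=
        insert (f (x (i+1)))
          ((hfin.toFinset.filter (fun y => x (i+1) < y)).image (fun y => δ * f y))
        with hF
      have hFne : F.Nonempty := ⟨f (x (i+1)), Finset.mem_insert_self _ _⟩
      set M := F.max' hFne with hM
      have hfx1pos : 0 < f (x (i+1)) := hfposIcc _ (hxmem (i+1) (by omega) h2)
      have hMlt : M < f (z i) := by
        apply Finset.max'_lt_iff F hFne |>.2
        intro a ha
        rw [hF] at ha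
        rcases Finset.mem_insert.1 ha with rfl | ha
        · rw [hz2 i h2]; nlinarith
        · obtain ⟨y, hy, rfl⟩ := Finset.mem_image.1 ha
          have hyf := Finset.mem_filter.1 hy
          have hyY : y ∈ Y := hfin.mem_toFinset.1 hyf.1
          have hflt : f y < f (x (i+1)) :=
            hanti (hxmem (i+1) (by omega) h2) (hsub hyY) hyf.2
          rw [hz2 i h2]
          nlinarith
      -- use continuity at z i from the right
      have hzi_lt : z i < x (i+1) := (hbetween i h1 h2).2
      have hc : ContinuousWithinAt f (Set.Icc xmin xmax) (z i) :=
        hcont (z i) (hzmem i (by omega))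
      have hev : ∀ᶠ w in nhdsWithin (z i) (Set.Icc xmin xmax), M < f w :=
        hc.eventually (eventually_gt_nhds hMlt)
      have hooSub : Set.Ioo (z i) (x (i+1)) ⊆ Set.Icc xmin xmax := by
        intro w hwoo
        constructor
        · linarith [(hzmem i (by omega : i ≤ μ)).1, hwoo.1]
        · linarith [(hxmem (i+1) (by omega) h2).2, hwoo.2]
      have hmono2 : nhdsWithin (z i) (Set.Ioo (z i) (x (i+1))) ≤
          nhdsWithin (z i) (Set.Icc xmin xmax) := nhdsWithin_mono _ hooSub
      have hnb : (nhdsWithin (z i) (Set.Ioo (z i) (x (i+1)))).NeBot := by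
        rw [nhdsWithin_Ioo_eq_nhdsGT hzi_lt]
        exact nhdsGT_neBot _
      obtain ⟨w, hwf, hwoo⟩ :=
        ((hev.filter_mono hmono2).and self_mem_nhdsWithin).exists
      have hwmem : w ∈ Set.Icc xmin xmax := hooSub hwoo
      obtain ⟨y, hyY, hy1, hy2⟩ := hA.2 w hwmem
      have hxiy : x i < y := by
        have hzi : z i < δ * y := lt_of_lt_of_le hwoo.1 hy1
        rw [hz1 i h1 (by omega)] at hzi
        exact lt_of_mul_lt_mul_left hzi hδ0.le
      have hgt : x (i+1) < y := hcon y hyY hxiy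
      have hmem : δ * f y ∈ F := by
        rw [hF]
        exact Finset.mem_insert_of_mem (Finset.mem_image.2
          ⟨y, Finset.mem_filter.2 ⟨hfin.mem_toFinset.2 hyY, hgt⟩, rfl⟩)
      have := Finset.le_max' F _ hmem
      linarith
    -- construct the covering family g
    have hgex : ∀ i, ∃ y, (i = 0 → y ∈ Y ∧ y ≤ x 1) ∧
        (1 ≤ i → i < μ → y ∈ Y ∧ x i < y ∧ y ≤ x (i+1)) := by
      intro i
      rcases Nat.eq_zero_or_pos i with rfl | h1
      · obtain ⟨y, hyY, hy⟩ := hF0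
        exact ⟨y, fun _ => ⟨hyY, hy⟩, fun h _ => absurd h (by omega)⟩
      · by_cases hi : i < μ
        · obtain ⟨y, hyY, hy1, hy2⟩ := hFw i h1 hi
          exact ⟨y, fun h => absurd h (by omega), fun _ _ => ⟨hyY, hy1, hy2⟩⟩
        · exact ⟨0, fun h => absurd h (by omega), fun _ h => absurd h hi⟩
    choose g hg using hgex
    have hgY : ∀ i, i < μ → g i ∈ Y := by
      intro i hi
      rcases Nat.eq_zero_or_pos i with rfl | h1
      · exact ((hg 0).1 rfl).1
      · exact ((hg i).2 h1 hi).1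
    have hgle : ∀ i, i < μ → g i ≤ x (i+1) := by
      intro i hi
      rcases Nat.eq_zero_or_pos i with rfl | h1
      · exact ((hg 0).1 rfl).2
      · exact ((hg i).2 h1 hi).2.2
    have hggt : ∀ i, 1 ≤ i → i < μ → x i < g i := fun i h1 hi => ((hg i).2 h1 hi).2.1
    have hgadj : ∀ i, i < μ - 1 → g i < g (i+1) := by
      intro i hi
      exact lt_of_le_of_lt (hgle i (by omega)) (hggt (i+1) (by omega) (by omega))
    have hglt : ∀ {i j : ℕ}, i < j → j ≤ μ - 1 → g i < g j := fun hij hj =>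
      adjLtAux (lo := 0) (fun i _ hi => hgadj i hi) (Nat.zero_le _) hij hj
    have hgmle : ∀ {i j : ℕ}, i ≤ j → j ≤ μ - 1 → g i ≤ g j := fun hij hj =>
      adjLeAux (lo := 0) (fun i _ hi => hgadj i hi) (Nat.zero_le _) hij hj
    have hginj : Set.InjOn g ↑(Finset.range μ) := by
      intro a ha b hb hab
      simp only [Finset.coe_range, Set.mem_Iio] at ha hb
      by_contra hne
      rcases lt_or_gt_of_ne hne with h | h
      · exact absurd hab (ne_of_lt (hglt h (by omega)))
      · exact absurd hab.symm (ne_of_lt (hglt h (by omega)))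
    have hGcard : ((Finset.range μ).image g).card = μ := by
      rw [Finset.card_image_of_injOn hginj, Finset.card_range]
    have hGsub : (Finset.range μ).image g ⊆ hfin.toFinset := by
      intro w hw
      simp only [Finset.mem_image, Finset.mem_range] at hw
      obtain ⟨j, hj, rfl⟩ := hw
      exact hfin.mem_toFinset.2 (hgY j hj)
    have hGeq : (Finset.range μ).image g = hfin.toFinset := by
      apply Finset.eq_of_subset_of_card_le hGsub
      rw [hGcard, ← Set.ncard_eq_toFinset_card Y hfin, hcard]
    have hYrep : ∀ y ∈ Y, ∃ j, j < μ ∧ g j = y := by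
      intro y hy
      have : y ∈ (Finset.range μ).image g := by
        rw [hGeq]; exact hfin.mem_toFinset.2 hy
      obtain ⟨j, hj, hgj⟩ := Finset.mem_image.1 this
      exact ⟨j, Finset.mem_range.1 hj, hgj⟩
    -- x k ∈ Y for all k
    have hXY : ∀ k, 1 ≤ k → k ≤ μ → x k ∈ Y := by
      rcases eq_or_lt_of_le hμ with hμ1 | hμ2
      · -- μ = 1
        intro k h1 h2
        have hk : k = 1 := by omega
        subst hk
        obtain ⟨y, hyY, hy1, _⟩ := hFy 1 le_rfl (by omega)
        obtain ⟨j, hj, rfl⟩ := hYrep y hyY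
        have hj0 : j = 0 := by omega
        subst hj0
        have : g 0 ≤ x 1 := hgle 0 (by omega)
        have hgx : g 0 = x 1 := le_antisymm this hy1
        rw [← hgx]
        exact hyY
      · -- μ ≥ 2
        have hμ2' : 2 ≤ μ := hμ2
        have htop : g (μ - 1) = x μ := by
          obtain ⟨y, hyY, hy1, _⟩ := hFy μ hμ le_rfl
          obtain ⟨j, hj, rfl⟩ := hYrep y hyY
          have hjeq : j = μ - 1 := by
            by_contra hne
            have hj2 : j + 1 ≤ μ - 1 := by omega
            have h2 : g j ≤ x (j+1) := hgle j hj
            have h3 : x (j+1) ≤ x (μ-1) := hxle (by omega) hj2 (by omega)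
            have h4 : x (μ-1) < x μ := hxlt (by omega) (by omega) le_rfl
            linarith
          subst hjeq
          have h2 : g (μ-1) ≤ x (μ-1+1) := hgle (μ-1) (by omega)
          rw [show μ - 1 + 1 = μ by omega] at h2
          exact le_antisymm h2 hy1
        have hstep : ∀ d, d ≤ μ - 2 → g (μ-1-d) = x (μ-d) := by
          intro d
          induction d with
          | zero => intro _; simpa using htop
          | succ n ih =>
            intro hd
            have hIH := ih (by omega)
            have hk1 : 1 ≤ μ - 1 - (n+1) := by omega
            set k := μ - 1 - (n+1) with hk
            have hkey1 : μ - 1 - n = k + 1 := by omega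
            have hkey2 : μ - n = k + 2 := by omega
            rw [hkey1, hkey2] at hIH
            show g k = x (μ - (n+1))
            rw [show μ - (n+1) = k + 1 by omega]
            obtain ⟨y, hyY, hy1, hy2⟩ := hFv (k+1) (by omega) (by omega)
            obtain ⟨j, hj, rfl⟩ := hYrep y hyY
            rcases Nat.eq_zero_or_pos j with rfl | hj1
            · have h2 : g 0 ≤ x 1 := hgle 0 (by omega)
              have h3 : x 1 < x (k+1) := hxlt le_rfl (by omega) (by omega)
              linarith
            · by_cases hjk : j ≤ k
              · have h2 : g j ≤ x (j+1) := hgle j (by omega)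
                have h3 : x (j+1) ≤ x (k+1) := hxle (by omega) (by omega) (by omega)
                have h4 : g j = x (k+1) := le_antisymm (le_trans h2 h3) hy1
                have h5 : x (j+1) = x (k+1) := le_antisymm h3 (by linarith)
                have h6 : j = k := by
                  by_contra hne
                  have : x (j+1) < x (k+1) := hxlt (by omega) (by omega) (by omega)
                  linarith
                exact h6 ▸ h4
              · have h2 : g (k+1) ≤ g j := hgmle (by omega) (by omega)
                rw [hIH] at h2
                have h3 : x (k+1) < x (k+2) := hxlt (by omega) (by omega) (by omega)
                linarith
        have hgk : ∀ k, 1 ≤ k → k ≤ μ - 1 → g k = x (k+1) := by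
          intro k h1 h2
          have := hstep (μ - 1 - k) (by omega)
          rwa [show μ - 1 - (μ - 1 - k) = k by omega,
            show μ - (μ - 1 - k) = k + 1 by omega] at this
        have hg0x : g 0 = x 1 := by
          obtain ⟨y, hyY, hy1, hy2⟩ := hFv 1 le_rfl (by omega)
          obtain ⟨j, hj, rfl⟩ := hYrep y hyY
          rcases Nat.eq_zero_or_pos j with rfl | hj1
          · exact le_antisymm (hgle 0 (by omega)) hy1
          · exfalso
            have h2 : g j = x (j+1) := hgk j hj1 (by omega)
            have h3 : x 2 ≤ x (j+1) := hxle (by omega) (by omega) (by omega)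
            linarith
        intro k h1 h2
        rcases eq_or_lt_of_le h1 with hk1 | hk2
        · rw [← hk1, ← hg0x]
          exact hgY 0 (by omega)
        · have hgk' : g (k-1) = x k := by
            have := hgk (k-1) (by omega) (by omega)
            rwa [show k - 1 + 1 = k by omega] at this
          rw [← hgk']
          exact hgY (k-1) (by omega)
    have hXsubY : X ⊆ Y := by
      rintro w ⟨i, hi1, hi2, rfl⟩
      exact hXY i hi1 hi2
    exact (Set.eq_of_subset_of_ncard_le hXsubY (by rw [hcard, hXcard]) hfin).symm
end

section
/- Let f:[1,(1−d)/c]→[1,c+d] be the linear front f(x)=c·x+d with c<0 and d>1−c, and μ≥1. The μ-point set with x_i = d(μc − i(c+d−1)) / (c(c+(μ+1)d−1)), i=1,…,μ, achieves the minimum multiplicative approximation ratio among all μ-point subsets of the domain, and this optimal ratio equals (c+(μ+1)d−1)/(μd). -/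
open Set Finset Real MeasureTheory
open scoped ENNReal

lemma keyLB (c d : ℝ) (hc : c < 0) (hd : 1 - c < d) (μ : ℕ) (hμ : 1 ≤ μ)
    (Y : Set ℝ) (hfin : Y.Finite) (hcard : Y.ncard ≤ μ) (δ : ℝ)
    (hap : IsApprox (fun x => c * x + d) 1 ((1 - d) / c) Y δ) :
    (c + ((μ : ℝ) + 1) * d - 1) / ((μ : ℝ) * d) ≤ δ := by
  obtain ⟨hδ1, hcov⟩ := hap
  have hd1 : (1:ℝ) < d := by linarith
  have hμ' : (1:ℝ) ≤ (μ:ℝ) := by exact_mod_cast hμ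
  set b : ℝ := (1 - d) / c with hb
  set t : Finset ℝ := hfin.toFinset with ht
  have hcardt : (t.card : ℝ) ≤ (μ : ℝ) := by
    have : t.card = Y.ncard := by rw [ht, Set.ncard_eq_toFinset_card Y hfin]
    rw [this]; exact_mod_cast hcard
  set ℓ : ℝ := (δ - 1) * d / (-c) with hℓ
  have hℓ0 : 0 ≤ ℓ := by
    apply div_nonneg; nlinarith; linarith
  have hsub : Set.Icc (1:ℝ) b ⊆ ⋃ y ∈ t, Set.Icc (δ * y + (δ - 1) * d / c) (δ * y) := by
    intro x hx
    obtain ⟨y, hyY, hxy, hfxy⟩ := hcov x hx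
    refine Set.mem_biUnion (hfin.mem_toFinset.mpr hyY) ?_
    refine ⟨?_, hxy⟩
    have h1 : c * x + d ≤ δ * (c * y + d) := hfxy
    have e : (δ - 1) * d / c * c = (δ - 1) * d := div_mul_cancel₀ _ (ne_of_lt hc)
    by_contra hlt
    push_neg at hlt
    nlinarith [mul_lt_mul_of_neg_right hlt hc]
  have hvol : ENNReal.ofReal (b - 1) ≤ ENNReal.ofReal ((μ:ℝ) * ℓ) := by
    calc ENNReal.ofReal (b - 1) = volume (Set.Icc (1:ℝ) b) := (Real.volume_Icc).symm
    _ ≤ volume (⋃ y ∈ t, Set.Icc (δ * y + (δ - 1) * d / c) (δ * y)) :=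
        measure_mono hsub
    _ ≤ ∑ y ∈ t, volume (Set.Icc (δ * y + (δ - 1) * d / c) (δ * y)) :=
        measure_biUnion_finset_le t _
    _ = ∑ _y ∈ t, ENNReal.ofReal ℓ := by
        apply Finset.sum_congr rfl; intro y _
        rw [Real.volume_Icc]
        rw [hℓ]; congr 1; ring
    _ = (t.card : ℝ≥0∞) * ENNReal.ofReal ℓ := by
        rw [Finset.sum_const, nsmul_eq_mul]
    _ ≤ ENNReal.ofReal ((μ:ℝ) * ℓ) := by
        rw [ENNReal.ofReal_mul (by positivity)]
        gcongr
        calc (t.card : ℝ≥0∞) = ENNReal.ofReal (t.card : ℝ) := by simp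
        _ ≤ ENNReal.ofReal (μ:ℝ) := ENNReal.ofReal_le_ofReal hcardt
  have hreal : b - 1 ≤ (μ:ℝ) * ℓ := (ENNReal.ofReal_le_ofReal_iff (by positivity)).mp hvol
  have hbc : b * c = 1 - d := div_mul_cancel₀ _ hc.ne
  have e1 : (b - 1) * (-c) = c + d - 1 := by linear_combination -hbc
  have e2 : ℓ * (-c) = (δ - 1) * d :=
    div_mul_cancel₀ _ (neg_ne_zero.mpr hc.ne)
  have h3 : c + d - 1 ≤ (μ:ℝ) * ((δ - 1) * d) := by
    have := mul_le_mul_of_nonneg_right hreal (by linarith : (0:ℝ) ≤ -c)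
    rw [e1, mul_assoc, e2] at this
    exact this
  rw [div_le_iff₀ (by positivity)]
  nlinarith

lemma keyUB (c d : ℝ) (hc : c < 0) (hd : 1 - c < d) (μ : ℕ) (hμ : 1 ≤ μ) :
    IsApprox (fun x => c * x + d) 1 ((1 - d) / c)
      {y | ∃ i : ℕ, 1 ≤ i ∧ i ≤ μ ∧
        y = d * ((μ : ℝ) * c - (i : ℝ) * (c + d - 1)) / (c * (c + ((μ : ℝ) + 1) * d - 1))}
      ((c + ((μ : ℝ) + 1) * d - 1) / ((μ : ℝ) * d)) := by
  have hd1 : (1:ℝ) < d := by linarith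
  have hμ' : (1:ℝ) ≤ (μ:ℝ) := by exact_mod_cast hμ
  have hμd : (0:ℝ) < (μ:ℝ) * d := by positivity
  have hA : (0:ℝ) < c + ((μ:ℝ) + 1) * d - 1 := by nlinarith
  have hc0 : c ≠ 0 := hc.ne
  have hμ0 : (μ:ℝ) ≠ 0 := by positivity
  have hd0 : d ≠ 0 := by positivity
  have hA0 : c + ((μ:ℝ) + 1) * d - 1 ≠ 0 := hA.ne'
  set δ : ℝ := (c + ((μ:ℝ) + 1) * d - 1) / ((μ:ℝ) * d) with hδ
  set h : ℝ := (c + d - 1) / (-((μ:ℝ) * c)) with hh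
  have hh0 : 0 < h := by
    apply div_pos (by linarith); nlinarith
  have hgR : ∀ i : ℕ, δ * (d * ((μ : ℝ) * c - (i : ℝ) * (c + d - 1)) /
      (c * (c + ((μ : ℝ) + 1) * d - 1))) = 1 + (i:ℝ) * h := by
    intro i
    rw [hδ, hh]
    field_simp [hc0, hμ0, hd0, hA0]
    ring
  have hgL : ∀ i : ℕ, δ * (d * ((μ : ℝ) * c - (i : ℝ) * (c + d - 1)) /
      (c * (c + ((μ : ℝ) + 1) * d - 1))) + (δ - 1) * d / c = 1 + ((i:ℝ) - 1) * h := by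
    intro i
    rw [hδ, hh]
    field_simp [hc0, hμ0, hd0, hA0]
    ring
  have hbh : (1 - d) / c = 1 + (μ:ℝ) * h := by
    rw [hh]; field_simp; ring
  constructor
  · rw [hδ, le_div_iff₀ hμd]; nlinarith
  · intro x hx
    obtain ⟨hx1, hxb⟩ := hx
    rw [hbh] at hxb
    set t : ℝ := (x - 1) / h with hT
    have ht0 : 0 ≤ t := div_nonneg (by linarith) hh0.le
    have htμ : t ≤ (μ:ℝ) := by
      rw [hT, div_le_iff₀ hh0]; linarith
    set i : ℕ := max 1 ⌈t⌉₊ with hi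
    have hi1 : 1 ≤ i := le_max_left _ _
    have hiμ : i ≤ μ := by
      apply max_le hμ
      exact Nat.ceil_le.mpr (by exact_mod_cast htμ)
    have hxu : x ≤ 1 + (i:ℝ) * h := by
      have h1 : t ≤ (⌈t⌉₊ : ℝ) := Nat.le_ceil t
      have h2 : (⌈t⌉₊ : ℝ) ≤ (i:ℝ) := by exact_mod_cast le_max_right 1 ⌈t⌉₊
      have : x - 1 = t * h := by rw [hT]; field_simp
      nlinarith
    have hxl : 1 + ((i:ℝ) - 1) * h ≤ x := by
      have hit : (i:ℝ) - 1 ≤ t := by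
        rcases le_or_gt ⌈t⌉₊ 1 with hle | hgt
        · have : i = 1 := by rw [hi]; omega
          rw [this]; simpa using ht0
        · have hie : i = ⌈t⌉₊ := by rw [hi]; omega
          have := Nat.lt_ceil.mp (show ⌈t⌉₊ - 1 < ⌈t⌉₊ by omega)
          rw [hie]
          push_cast [Nat.cast_sub (by omega : 1 ≤ ⌈t⌉₊)] at this ⊢
          linarith
      have : x - 1 = t * h := by rw [hT]; field_simp
      nlinarith
    refine ⟨_, ⟨i, hi1, hiμ, rfl⟩, ?_, ?_⟩
    · rw [← hgR i] at hxu; linarith [hgR i]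
    · simp only
      have hL := hgL i
      set g := d * ((μ : ℝ) * c - (i : ℝ) * (c + d - 1)) /
        (c * (c + ((μ : ℝ) + 1) * d - 1)) with hg
      have e : (δ - 1) * d / c * c = (δ - 1) * d := div_mul_cancel₀ _ hc.ne
      have hx2 : δ * g + (δ - 1) * d / c ≤ x := by rw [hL]; exact hxl
      have h5 := mul_le_mul_of_nonpos_left hx2 hc.le
      rw [mul_add] at h5
      have e' : c * ((δ - 1) * d / c) = (δ - 1) * d := by rw [mul_comm]; exact e
      rw [e'] at h5
      linarith

theorem stmt6 (c d : ℝ) (hc : c < 0) (hd : 1 - c < d) (μ : ℕ) (hμ : 1 ≤ μ) :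
    approxRatio (fun x => c * x + d) 1 ((1 - d) / c)
      {y | ∃ i : ℕ, 1 ≤ i ∧ i ≤ μ ∧
        y = d * ((μ : ℝ) * c - (i : ℝ) * (c + d - 1)) / (c * (c + ((μ : ℝ) + 1) * d - 1))}
      = (c + ((μ : ℝ) + 1) * d - 1) / ((μ : ℝ) * d) ∧
    ∀ Y : Set ℝ, Y ⊆ Set.Icc 1 ((1 - d) / c) → Y.Finite → Y.ncard = μ →
      (c + ((μ : ℝ) + 1) * d - 1) / ((μ : ℝ) * d) ≤
        approxRatio (fun x => c * x + d) 1 ((1 - d) / c) Y := by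
  have hd1 : (1:ℝ) < d := by linarith
  set X : Set ℝ := {y | ∃ i : ℕ, 1 ≤ i ∧ i ≤ μ ∧
      y = d * ((μ : ℝ) * c - (i : ℝ) * (c + d - 1)) / (c * (c + ((μ : ℝ) + 1) * d - 1))} with hX
  have hXeq : X = ↑((Finset.Icc 1 μ).image
      (fun i : ℕ => d * ((μ : ℝ) * c - (i : ℝ) * (c + d - 1)) / (c * (c + ((μ : ℝ) + 1) * d - 1)))) := by
    ext y
    simp only [hX, Set.mem_setOf_eq, Finset.coe_image, Set.mem_image, Finset.mem_coe,
      Finset.mem_Icc]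
    constructor
    · rintro ⟨i, h1, h2, h3⟩; exact ⟨i, ⟨h1, h2⟩, h3.symm⟩
    · rintro ⟨i, ⟨h1, h2⟩, h3⟩; exact ⟨i, h1, h2, h3.symm⟩
  have hXfin : X.Finite := by rw [hXeq]; exact Finset.finite_toSet _
  have hXcard : X.ncard ≤ μ := by
    rw [hXeq, Set.ncard_coe_finset]
    calc _ ≤ (Finset.Icc 1 μ).card := Finset.card_image_le
    _ = μ := by rw [Nat.card_Icc]; omega
  have hlow : ∀ δ' ∈ {δ : ℝ | IsApprox (fun x => c * x + d) 1 ((1 - d) / c) X δ},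
      (c + ((μ : ℝ) + 1) * d - 1) / ((μ : ℝ) * d) ≤ δ' :=
    fun δ' hδ' => keyLB c d hc hd μ hμ X hXfin hXcard δ' hδ'
  constructor
  · unfold approxRatio
    exact le_antisymm (csInf_le ⟨_, hlow⟩ (keyUB c d hc hd μ hμ))
      (le_csInf ⟨_, keyUB c d hc hd μ hμ⟩ hlow)
  · intro Y hYsub hYfin hYcard
    have hYne : Y.Nonempty := by
      rw [← Set.ncard_pos hYfin, hYcard]; omega
    obtain ⟨y₀, hy₀⟩ := hYne
    obtain ⟨hy₀1, hy₀b⟩ := hYsub hy₀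
    have hbc : ((1 - d) / c) * c = 1 - d := div_mul_cancel₀ _ hc.ne
    have hfy₀ : 1 ≤ c * y₀ + d := by nlinarith [mul_le_mul_of_nonpos_left hy₀b hc.le]
    have hb1 : (1:ℝ) < (1 - d) / c := by
      rw [lt_div_iff_of_neg hc]; linarith
    set δ₀ : ℝ := max ((1 - d) / c) (c + d) with hδ₀
    have hδ₀1 : 1 ≤ δ₀ := le_trans hb1.le (le_max_left _ _)
    unfold approxRatio
    apply le_csInf
    · refine ⟨δ₀, hδ₀1, ?_⟩
      intro x ⟨hx1, hxb⟩
      refine ⟨y₀, hy₀, ?_, ?_⟩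
      · calc x ≤ (1 - d) / c := hxb
        _ ≤ δ₀ := le_max_left _ _
        _ ≤ δ₀ * y₀ := le_mul_of_one_le_right (by linarith) hy₀1
      · simp only
        calc c * x + d ≤ c + d := by nlinarith
        _ ≤ δ₀ := le_max_right _ _
        _ ≤ δ₀ * (c * y₀ + d) := le_mul_of_one_le_right (by linarith) hfy₀
    · intro δ hδ
      exact keyLB c d hc hd μ hμ Y hYfin (le_of_eq hYcard) δ hδ
end

section
/- Let f:[1,c]→[1,c] be f(x)=c/x with c>1 and μ≥1. The set X={c^{(2i−1)/(2μ)} : i=1,…,μ} achieves the minimum multiplicative approximation ratio among all μ-point subsets of [1,c], and this optimal ratio equals c^{1/(2μ)}. -/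
open Set Finset Real

/-- Key lower bound: any valid approximation ratio for a μ-point set is at least c^(1/(2μ)). -/
lemma lemA (c : ℝ) (hc : 1 < c) (μ : ℕ) (hμ : 1 ≤ μ) (Y : Set ℝ)
    (hYsub : Y ⊆ Set.Icc 1 c) (hYfin : Y.Finite) (hYcard : Y.ncard = μ)
    (δ : ℝ) (hδ : IsApprox (fun x => c / x) 1 c Y δ) :
    c ^ ((1:ℝ)/(2*(μ:ℝ))) ≤ δ := by
  obtain ⟨hδ1, hcov⟩ := hδ
  have hc0 : (0:ℝ) < c := lt_trans one_pos hc
  have hδ0 : (0:ℝ) < δ := lt_of_lt_of_le one_pos hδ1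
  set L := Real.log δ with hLdef
  have hL : 0 ≤ L := Real.log_nonneg hδ1
  have hμ0 : (0:ℝ) < (μ:ℝ) := by positivity
  have hsub : Set.Icc (0:ℝ) (Real.log c) ⊆
      ⋃ y ∈ hYfin.toFinset, Set.Icc (Real.log y - L) (Real.log y + L) := by
    intro t ht
    have hx1 : (1:ℝ) ≤ Real.exp t := by
      simpa using Real.exp_le_exp.mpr ht.1
    have hxc : Real.exp t ≤ c := by
      calc Real.exp t ≤ Real.exp (Real.log c) := Real.exp_le_exp.mpr ht.2
        _ = c := Real.exp_log hc0
    obtain ⟨y, hyY, hxy, hfxy⟩ := hcov (Real.exp t) ⟨hx1, hxc⟩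
    have hy1 : (1:ℝ) ≤ y := (hYsub hyY).1
    have hy0 : (0:ℝ) < y := lt_of_lt_of_le one_pos hy1
    have hx0 : (0:ℝ) < Real.exp t := Real.exp_pos t
    simp only [Set.mem_iUnion]
    refine ⟨y, hYfin.mem_toFinset.mpr hyY, ?_, ?_⟩
    · -- log y - L ≤ t, from y ≤ δ * exp t
      have : y ≤ δ * Real.exp t := by
        have h : c / Real.exp t ≤ δ * (c / y) := hfxy
        rw [div_le_iff₀ hx0] at h
        have h2 : c * y ≤ δ * c * Real.exp t := by
          calc c * y ≤ δ * (c / y) * Real.exp t * y :=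
                mul_le_mul_of_nonneg_right h hy0.le
            _ = δ * c * Real.exp t := by field_simp
        nlinarith
      have := Real.log_le_log hy0 this |>.trans_eq (Real.log_mul hδ0.ne' hx0.ne')
      rw [Real.log_exp] at this
      linarith
    · -- t ≤ log y + L
      have := Real.log_le_log hx0 hxy
      rw [Real.log_exp, Real.log_mul hδ0.ne' hy0.ne'] at this
      linarith
  -- measure
  have hmeas := MeasureTheory.measure_mono (μ := MeasureTheory.volume) hsub
  have hle : MeasureTheory.volume (⋃ y ∈ hYfin.toFinset, Set.Icc (Real.log y - L) (Real.log y + L))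
      ≤ ∑ y ∈ hYfin.toFinset, MeasureTheory.volume (Set.Icc (Real.log y - L) (Real.log y + L)) :=
    MeasureTheory.measure_biUnion_finset_le _ _
  have hvol : ∀ y : ℝ, MeasureTheory.volume (Set.Icc (Real.log y - L) (Real.log y + L))
      = ENNReal.ofReal (2 * L) := by
    intro y; rw [Real.volume_Icc]; ring_nf
  have hcard : hYfin.toFinset.card = μ := by
    rw [← hYcard, Set.ncard_eq_toFinset_card _ hYfin]
  have hsum : ∑ y ∈ hYfin.toFinset, MeasureTheory.volume (Set.Icc (Real.log y - L) (Real.log y + L))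
      = (μ : ℕ) • ENNReal.ofReal (2 * L) := by
    rw [Finset.sum_congr rfl (fun y _ => hvol y), Finset.sum_const, hcard]
  have hkey : ENNReal.ofReal (Real.log c) ≤ ENNReal.ofReal ((μ:ℝ) * (2 * L)) := by
    have h1 : MeasureTheory.volume (Set.Icc (0:ℝ) (Real.log c)) = ENNReal.ofReal (Real.log c) := by
      rw [Real.volume_Icc]; ring_nf
    calc ENNReal.ofReal (Real.log c) = _ := h1.symm
      _ ≤ _ := hmeas.trans (hle.trans_eq hsum)
      _ = ENNReal.ofReal ((μ:ℝ) * (2 * L)) := by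
          rw [nsmul_eq_mul, ← ENNReal.ofReal_natCast, ← ENNReal.ofReal_mul (by positivity)]
  have hreal : Real.log c ≤ (μ:ℝ) * (2 * L) :=
    (ENNReal.ofReal_le_ofReal_iff (by positivity)).mp hkey
  -- conclude
  have : c ^ ((1:ℝ)/(2*(μ:ℝ))) ≤ δ := by
    rw [← Real.exp_log (x := δ) hδ0, Real.rpow_def_of_pos hc0, Real.exp_le_exp]
    have h2 : Real.log c ≤ 2*(μ:ℝ)*L := by nlinarith
    calc Real.log c * ((1:ℝ)/(2*(μ:ℝ))) ≤ (2*(μ:ℝ)*L) * ((1:ℝ)/(2*(μ:ℝ))) :=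
          mul_le_mul_of_nonneg_right h2 (by positivity)
      _ = L := by field_simp
  exact this

/-- The geometric grid achieves ratio c^(1/(2μ)). -/
lemma lemB (c : ℝ) (hc : 1 < c) (μ : ℕ) (hμ : 1 ≤ μ) :
    IsApprox (fun x => c / x) 1 c
      {y | ∃ i : ℕ, 1 ≤ i ∧ i ≤ μ ∧ y = c ^ ((2 * (i : ℝ) - 1) / (2 * (μ : ℝ)))}
      (c ^ ((1 : ℝ) / (2 * (μ : ℝ)))) := by
  have hc0 : (0:ℝ) < c := lt_trans one_pos hc
  have hμ0 : (0:ℝ) < (μ:ℝ) := by exact_mod_cast hμ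
  have hlogc : 0 < Real.log c := Real.log_pos hc
  have hδ1 : (1:ℝ) ≤ c ^ ((1:ℝ)/(2*(μ:ℝ))) := by
    calc (1:ℝ) = c ^ (0:ℝ) := (Real.rpow_zero c).symm
      _ ≤ c ^ ((1:ℝ)/(2*(μ:ℝ))) :=
        Real.rpow_le_rpow_of_exponent_le hc.le (by positivity)
  refine ⟨hδ1, fun x hx => ?_⟩
  have hx0 : (0:ℝ) < x := lt_of_lt_of_le one_pos hx.1
  set t := Real.log x / Real.log c with htdef
  have ht0 : 0 ≤ t := div_nonneg (Real.log_nonneg hx.1) hlogc.le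
  have ht1 : t ≤ 1 := by
    rw [htdef, div_le_one hlogc]
    exact Real.log_le_log hx0 hx.2
  have hxct : x = c ^ t := by
    rw [Real.rpow_def_of_pos hc0, htdef, mul_div_cancel₀ _ hlogc.ne', Real.exp_log hx0]
  set i := max 1 ⌈t * (μ:ℝ)⌉₊ with hidef
  have hi1 : 1 ≤ i := le_max_left _ _
  have hiμ : i ≤ μ := max_le hμ (Nat.ceil_le.mpr (by nlinarith))
  have hub : t * (μ:ℝ) ≤ (i:ℝ) := by
    calc t * (μ:ℝ) ≤ (⌈t * (μ:ℝ)⌉₊ : ℝ) := Nat.le_ceil _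
      _ ≤ (i:ℝ) := by exact_mod_cast Nat.cast_le.mpr (le_max_right _ _)
  have hlb : (i:ℝ) - 1 ≤ t * (μ:ℝ) := by
    rcases le_or_gt ⌈t * (μ:ℝ)⌉₊ 1 with h | h
    · have : i = 1 := by rw [hidef]; omega
      rw [this]; norm_num; positivity
    · have : i = ⌈t * (μ:ℝ)⌉₊ := by rw [hidef]; omega
      rw [this]
      have := Nat.ceil_lt_add_one (by positivity : (0:ℝ) ≤ t * (μ:ℝ))
      linarith
  set e := (2 * (i:ℝ) - 1) / (2 * (μ:ℝ)) with hedef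
  refine ⟨c ^ e, ⟨i, hi1, hiμ, rfl⟩, ?_, ?_⟩
  · rw [hxct, ← Real.rpow_add hc0]
    apply Real.rpow_le_rpow_of_exponent_le hc.le
    rw [hedef, ← add_div, le_div_iff₀ (by positivity)]
    nlinarith
  · simp only
    have h1 : c / x = c ^ ((1:ℝ) - t) := by
      rw [hxct, Real.rpow_sub hc0, Real.rpow_one]
    have h2 : c / c ^ e = c ^ ((1:ℝ) - e) := by
      rw [Real.rpow_sub hc0, Real.rpow_one]
    rw [h1, h2, ← Real.rpow_add hc0]
    apply Real.rpow_le_rpow_of_exponent_le hc.le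
    have h3 : (2*(i:ℝ)-1)/(2*(μ:ℝ)) - 1/(2*(μ:ℝ)) ≤ t := by
      rw [div_sub_div_same, div_le_iff₀ (by positivity)]
      nlinarith
    linarith

lemma lemXsub (c : ℝ) (hc : 1 < c) (μ : ℕ) (hμ : 1 ≤ μ) :
    ({y | ∃ i : ℕ, 1 ≤ i ∧ i ≤ μ ∧ y = c ^ ((2 * (i : ℝ) - 1) / (2 * (μ : ℝ)))} : Set ℝ)
      ⊆ Set.Icc 1 c := by
  have hc0 : (0:ℝ) < c := lt_trans one_pos hc
  have hμ0 : (0:ℝ) < (μ:ℝ) := by exact_mod_cast hμ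
  rintro y ⟨i, hi1, hiμ, rfl⟩
  have hi1' : (1:ℝ) ≤ (i:ℝ) := by exact_mod_cast hi1
  have hiμ' : (i:ℝ) ≤ (μ:ℝ) := by exact_mod_cast hiμ
  constructor
  · calc (1:ℝ) = c ^ (0:ℝ) := (Real.rpow_zero c).symm
      _ ≤ _ := Real.rpow_le_rpow_of_exponent_le hc.le
        (div_nonneg (by linarith) (by positivity))
  · have h1 : (2*(i:ℝ)-1)/(2*(μ:ℝ)) ≤ 1 := by
      rw [div_le_one (by positivity)]; linarith
    calc c ^ ((2*(i:ℝ)-1)/(2*(μ:ℝ))) ≤ c ^ (1:ℝ) :=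
        Real.rpow_le_rpow_of_exponent_le hc.le h1
      _ = c := Real.rpow_one c

lemma lemXeq (c : ℝ) (μ : ℕ) :
    ({y | ∃ i : ℕ, 1 ≤ i ∧ i ≤ μ ∧ y = c ^ ((2 * (i : ℝ) - 1) / (2 * (μ : ℝ)))} : Set ℝ)
      = (fun i : ℕ => c ^ ((2 * (i : ℝ) - 1) / (2 * (μ : ℝ)))) '' (Set.Icc 1 μ) := by
  ext y
  simp only [Set.mem_setOf_eq, Set.mem_image, Set.mem_Icc]
  constructor
  · rintro ⟨i, h1, h2, rfl⟩; exact ⟨i, ⟨h1, h2⟩, rfl⟩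
  · rintro ⟨i, ⟨h1, h2⟩, rfl⟩; exact ⟨i, h1, h2, rfl⟩

lemma lemXcard (c : ℝ) (hc : 1 < c) (μ : ℕ) (hμ : 1 ≤ μ) :
    ((fun i : ℕ => c ^ ((2 * (i : ℝ) - 1) / (2 * (μ : ℝ)))) '' (Set.Icc 1 μ)).ncard = μ := by
  have hμ0 : (0:ℝ) < (μ:ℝ) := by exact_mod_cast hμ
  have hc0 : (0:ℝ) < c := lt_trans one_pos hc
  have hinj : Set.InjOn (fun i : ℕ => c ^ ((2 * (i : ℝ) - 1) / (2 * (μ : ℝ)))) (Set.Icc 1 μ) := by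
    intro i _ j _ hij
    simp only at hij
    have h1 := (Real.rpow_le_rpow_left_iff hc).mp hij.le
    have h2 := (Real.rpow_le_rpow_left_iff hc).mp hij.ge
    rw [div_le_div_iff₀ (by positivity) (by positivity)] at h1 h2
    have : (i:ℝ) = (j:ℝ) := by nlinarith
    exact_mod_cast this
  rw [Set.ncard_image_of_injOn hinj]
  have h : (Set.Icc 1 μ : Set ℕ) = ↑(Finset.Icc 1 μ) := (Finset.coe_Icc 1 μ).symm
  rw [h, Set.ncard_coe_finset, Nat.card_Icc]
  omega

theorem stmt7 (c : ℝ) (hc : 1 < c) (μ : ℕ) (hμ : 1 ≤ μ) :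
    approxRatio (fun x => c / x) 1 c
      {y | ∃ i : ℕ, 1 ≤ i ∧ i ≤ μ ∧ y = c ^ ((2 * (i : ℝ) - 1) / (2 * (μ : ℝ)))}
      = c ^ ((1 : ℝ) / (2 * (μ : ℝ))) ∧
    ∀ Y : Set ℝ, Y ⊆ Set.Icc 1 c → Y.Finite → Y.ncard = μ →
      c ^ ((1 : ℝ) / (2 * (μ : ℝ))) ≤ approxRatio (fun x => c / x) 1 c Y := by
  have hc0 : (0:ℝ) < c := lt_trans one_pos hc
  have part2 : ∀ Y : Set ℝ, Y ⊆ Set.Icc 1 c → Y.Finite → Y.ncard = μ →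
      c ^ ((1 : ℝ) / (2 * (μ : ℝ))) ≤ approxRatio (fun x => c / x) 1 c Y := by
    intro Y hsub hfin hcard
    apply le_csInf
    · -- nonempty : δ = c works
      have hYne : Y.Nonempty := by
        rw [← Set.ncard_pos hfin, hcard]; omega
      obtain ⟨y0, hy0Y⟩ := hYne
      have hy01 : (1:ℝ) ≤ y0 := (hsub hy0Y).1
      have hy0c : y0 ≤ c := (hsub hy0Y).2
      have hy00 : (0:ℝ) < y0 := lt_of_lt_of_le one_pos hy01
      refine ⟨c, hc.le, fun x hx => ⟨y0, hy0Y, ?_, ?_⟩⟩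
      · nlinarith [hx.2]
      · simp only
        have h1 : c / x ≤ c := by
          rw [div_le_iff₀ (lt_of_lt_of_le one_pos hx.1)]
          nlinarith [hx.1]
        have h2 : (1:ℝ) ≤ c / y0 := by
          rw [le_div_iff₀ hy00]; linarith
        nlinarith
    · intro δ hδmem
      exact lemA c hc μ hμ Y hsub hfin hcard δ hδmem
  constructor
  · have hXsub := lemXsub c hc μ hμ
    have hXeq := lemXeq c μ
    have hXfin : ({y | ∃ i : ℕ, 1 ≤ i ∧ i ≤ μ ∧
        y = c ^ ((2 * (i : ℝ) - 1) / (2 * (μ : ℝ)))} : Set ℝ).Finite := by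
      rw [hXeq]
      exact (Set.finite_Icc 1 μ).image _
    have hXcard : ({y | ∃ i : ℕ, 1 ≤ i ∧ i ≤ μ ∧
        y = c ^ ((2 * (i : ℝ) - 1) / (2 * (μ : ℝ)))} : Set ℝ).ncard = μ := by
      rw [hXeq]; exact lemXcard c hc μ hμ
    apply le_antisymm
    · apply csInf_le
      · exact ⟨c ^ ((1 : ℝ) / (2 * (μ : ℝ))),
          fun δ hδ => lemA c hc μ hμ _ hXsub hXfin hXcard δ hδ⟩
      · exact lemB c hc μ hμ
    · exact part2 _ hXsub hXfin hXcard
  · exact part2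
end

section
/- Let c>1, μ≥2, and let r=(r_1,r_2) be a reference point with r_1 ≤ c·r_2^μ and r_2 ≤ c·r_1^μ and 0<r_1,r_2. Among tuples r_1<x_1<x_2<⋯<x_μ with 1≤x_1 and x_μ≤c, the function h(x_1,…,x_μ) = c·(r_1/x_1 + x_1/x_2 + ⋯ + x_{μ−1}/x_μ) + x_μ·r_2 is minimized at x_i = (c^i · r_1^{μ−i+1} / r_2^i)^{1/(μ+1)} for i=1,…,μ. -/
open Set Finset Real

noncomputable def hFun (c r1 r2 : ℝ) (μ : ℕ) (x : ℕ → ℝ) : ℝ :=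
  c * (r1 / x 1 + ∑ i ∈ Finset.Icc 2 μ, x (i - 1) / x i) + x μ * r2

noncomputable def xStar (c r1 r2 : ℝ) (μ : ℕ) (i : ℕ) : ℝ :=
  ((c ^ (i : ℝ) * r1 ^ ((μ : ℝ) - (i : ℝ) + 1)) / r2 ^ (i : ℝ)) ^ ((1 : ℝ) / ((μ : ℝ) + 1))

lemma myAMGM {ι : Type*} (s : Finset ι) (z : ι → ℝ) (hz : ∀ i ∈ s, 0 ≤ z i)
    (hcard : s.card ≠ 0) :
    (s.card : ℝ) * (∏ i ∈ s, z i) ^ ((1:ℝ)/(s.card:ℝ)) ≤ ∑ i ∈ s, z i := by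
  have hn : (0:ℝ) < s.card := by positivity
  have h := Real.geom_mean_le_arith_mean_weighted s (fun _ => (1:ℝ)/s.card) z
    (fun i _ => by positivity) (by simp [Finset.sum_const]; field_simp) hz
  have hp : (∏ i ∈ s, z i) ^ ((1:ℝ)/(s.card:ℝ)) = ∏ i ∈ s, z i ^ ((1:ℝ)/(s.card:ℝ)) :=
    (Real.finset_prod_rpow s z hz _).symm
  rw [hp]
  calc (s.card : ℝ) * ∏ i ∈ s, z i ^ ((1:ℝ)/(s.card:ℝ))
      ≤ (s.card : ℝ) * ∑ i ∈ s, ((1:ℝ)/s.card) * z i := by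
        apply mul_le_mul_of_nonneg_left h hn.le
    _ = ∑ i ∈ s, z i := by
        rw [← Finset.mul_sum, ← mul_assoc, mul_one_div, div_self hn.ne', one_mul]

lemma tele (w : ℕ → ℝ) : ∀ n, (∀ i, i ≤ n → w i ≠ 0) →
    ∏ i ∈ Finset.Icc 1 n, w (i-1) / w i = w 0 / w n := by
  intro n
  induction n with
  | zero => intro h; simp [div_self (h 0 le_rfl)]
  | succ n ih =>
    intro h
    rw [Finset.prod_Icc_succ_top (Nat.le_add_left 1 n),
      ih (fun i hi => h i (hi.trans (Nat.le_succ n)))]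
    have h0 := h n (Nat.le_succ n)
    have h1 := h (n+1) le_rfl
    simp only [Nat.add_sub_cancel]
    field_simp

lemma sumsplit (μ : ℕ) (hμ : 1 ≤ μ) (f : ℕ → ℝ) :
    ∑ i ∈ Finset.Icc 1 (μ+1), f i = f 1 + (∑ i ∈ Finset.Icc 2 μ, f i) + f (μ+1) := by
  rw [Finset.sum_Icc_succ_top (Nat.le_add_left 1 μ)]
  have : Finset.Icc 1 μ = (Finset.Ioc 1 μ).cons 1 Finset.left_notMem_Ioc :=
    Finset.Icc_eq_cons_Ioc hμ
  rw [this, Finset.sum_cons, ← Finset.Icc_add_one_left_eq_Ioc]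
  rfl

lemma rpow_inv_pow (B : ℝ) (hB : 0 ≤ B) (n : ℕ) (hn : (n:ℝ) ≠ 0) :
    (B ^ ((1:ℝ)/(n:ℝ))) ^ n = B := by
  rw [← Real.rpow_natCast (B ^ ((1:ℝ)/(n:ℝ))) n, ← Real.rpow_mul hB]
  field_simp
  simp

lemma rpow_inv_succ_pow (B : ℝ) (hB : 0 ≤ B) (μ : ℕ) :
    (B ^ ((1:ℝ)/((μ:ℝ)+1))) ^ (μ+1) = B := by
  have h := rpow_inv_pow B hB (μ+1) (by positivity)
  push_cast at h
  exact h

section starLemmas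
variable {c r1 r2 : ℝ} {μ : ℕ}

lemma xStar_pos (hc : 0 < c) (hr1 : 0 < r1) (hr2 : 0 < r2) (i : ℕ) :
    0 < xStar c r1 r2 μ i := by
  unfold xStar; positivity

lemma xStar_pow (hc : 0 < c) (hr1 : 0 < r1) (hr2 : 0 < r2) (i : ℕ) :
    xStar c r1 r2 μ i ^ (μ+1) = c ^ (i:ℝ) * r1 ^ ((μ:ℝ)-(i:ℝ)+1) / r2 ^ (i:ℝ) := by
  exact rpow_inv_succ_pow _ (by positivity) μ

lemma G_pow (hc : 0 < c) (hr1 : 0 < r1) (hr2 : 0 < r2) :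
    ((c ^ (μ:ℝ) * r1 * r2) ^ ((1:ℝ)/((μ:ℝ)+1))) ^ (μ+1) = c ^ (μ:ℝ) * r1 * r2 :=
  rpow_inv_succ_pow _ (by positivity) μ

lemma term_a (hc : 0 < c) (hr1 : 0 < r1) (hr2 : 0 < r2) :
    c * r1 / xStar c r1 r2 μ 1 = (c ^ (μ:ℝ) * r1 * r2) ^ ((1:ℝ)/((μ:ℝ)+1)) := by
  have hx1 := xStar_pos (μ := μ) hc hr1 hr2 1
  rw [← pow_left_inj₀ (by positivity) (by positivity) (Nat.succ_ne_zero μ)]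
  · rw [G_pow hc hr1 hr2, div_pow, mul_pow, xStar_pow hc hr1 hr2 1]
    rw [Nat.cast_one, Real.rpow_one, Real.rpow_one]
    have : (μ:ℝ) - 1 + 1 = (μ:ℝ) := by ring
    rw [this, Real.rpow_natCast, Real.rpow_natCast]
    field_simp
    simp only [Nat.succ_eq_add_one]
    ring

lemma term_c (hc : 0 < c) (hr1 : 0 < r1) (hr2 : 0 < r2) :
    xStar c r1 r2 μ μ * r2 = (c ^ (μ:ℝ) * r1 * r2) ^ ((1:ℝ)/((μ:ℝ)+1)) := by
  have hx := xStar_pos (μ := μ) hc hr1 hr2 μ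
  rw [← pow_left_inj₀ (by positivity) (by positivity) (Nat.succ_ne_zero μ)]
  rw [G_pow hc hr1 hr2, mul_pow, xStar_pow hc hr1 hr2 μ]
  have : (μ:ℝ) - (μ:ℝ) + 1 = 1 := by ring
  rw [this, Real.rpow_one, Real.rpow_natCast, Real.rpow_natCast]
  field_simp
  simp only [Nat.succ_eq_add_one]
  ring

lemma term_b (hc : 0 < c) (hr1 : 0 < r1) (hr2 : 0 < r2) (i : ℕ) (h2 : 1 ≤ i) :
    c * (xStar c r1 r2 μ (i-1) / xStar c r1 r2 μ i)
      = (c ^ (μ:ℝ) * r1 * r2) ^ ((1:ℝ)/((μ:ℝ)+1)) := by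
  have hx1 := xStar_pos (μ := μ) hc hr1 hr2 (i-1)
  have hx2 := xStar_pos (μ := μ) hc hr1 hr2 i
  rw [← pow_left_inj₀ (by positivity) (by positivity) (Nat.succ_ne_zero μ)]
  rw [G_pow hc hr1 hr2, mul_pow, div_pow, xStar_pow hc hr1 hr2 (i-1), xStar_pow hc hr1 hr2 i]
  have hcast : ((i-1 : ℕ) : ℝ) = (i:ℝ) - 1 := by
    rw [Nat.cast_sub h2, Nat.cast_one]
  rw [hcast]
  have e1 : c ^ ((i:ℝ) - 1) = c ^ (i:ℝ) / c := by
    rw [Real.rpow_sub hc, Real.rpow_one]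
  have e2 : r2 ^ ((i:ℝ) - 1) = r2 ^ (i:ℝ) / r2 := by
    rw [Real.rpow_sub hr2, Real.rpow_one]
  have e3 : r1 ^ ((μ:ℝ) - ((i:ℝ)-1) + 1) = r1 ^ ((μ:ℝ) - (i:ℝ) + 1) * r1 := by
    have h : (μ:ℝ) - ((i:ℝ)-1) + 1 = ((μ:ℝ) - (i:ℝ) + 1) + 1 := by ring
    rw [h, Real.rpow_add hr1, Real.rpow_one]
  rw [e1, e2, e3]
  have p1 : (0:ℝ) < c ^ (i:ℝ) := Real.rpow_pos_of_pos hc _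
  have p2 : (0:ℝ) < r2 ^ (i:ℝ) := Real.rpow_pos_of_pos hr2 _
  have p3 : (0:ℝ) < r1 ^ ((μ:ℝ) - (i:ℝ) + 1) := Real.rpow_pos_of_pos hr1 _
  rw [Real.rpow_natCast]
  field_simp
  simp only [Nat.succ_eq_add_one]
  rw [Real.rpow_natCast]
  ring

end starLemmas

theorem stmt8 (c : ℝ) (hc : 1 < c) (μ : ℕ) (hμ : 2 ≤ μ) (r1 r2 : ℝ)
    (hr1 : 0 < r1) (hr2 : 0 < r2)
    (h1 : r1 ≤ c * r2 ^ (μ : ℝ)) (h2 : r2 ≤ c * r1 ^ (μ : ℝ)) :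
    ∀ y : ℕ → ℝ, r1 < y 1 → 1 ≤ y 1 → y μ ≤ c →
      (∀ i, 1 ≤ i → i < μ → y i < y (i + 1)) →
      hFun c r1 r2 μ (xStar c r1 r2 μ) ≤ hFun c r1 r2 μ y := by
  intro y hyr1 hy1 hyc hchain
  have hc0 : (0:ℝ) < c := lt_trans one_pos hc
  have hμ1 : 1 ≤ μ := le_trans one_le_two hμ
  set G : ℝ := (c ^ (μ:ℝ) * r1 * r2) ^ ((1:ℝ)/((μ:ℝ)+1)) with hGdef
  have hGpos : 0 < G := by
    rw [hGdef]; positivity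
  -- y is at least 1 on [1, μ]
  have hyge : ∀ i, 1 ≤ i → i ≤ μ → 1 ≤ y i := by
    intro i
    induction i with
    | zero => intro h _; omega
    | succ n ih =>
      intro h1' h2'
      rcases Nat.lt_or_ge 1 (n+1) with h | h
      · have hn1 : 1 ≤ n := by omega
        have hlt := hchain n hn1 (by omega)
        have := ih hn1 (by omega)
        linarith
      · have hn : n + 1 = 1 := by omega
        rw [hn]; exact hy1
  have hypos : ∀ i, 1 ≤ i → i ≤ μ → 0 < y i :=
    fun i hi1 hi2 => lt_of_lt_of_le one_pos (hyge i hi1 hi2)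
  -- the augmented chain
  set w : ℕ → ℝ := fun i => if i = 0 then r1 else if i ≤ μ then y i else c / r2 with hwdef
  have hw : ∀ i, 0 < w i := by
    intro i
    rw [hwdef]
    by_cases h0 : i = 0
    · simp [h0, hr1]
    · by_cases hle : i ≤ μ
      · simp only [h0, hle, if_false, if_true]
        exact hypos i (Nat.one_le_iff_ne_zero.mpr h0) hle
      · simp only [h0, hle, if_false]
        positivity
  have hw0 : w 0 = r1 := by rw [hwdef]; simp
  have hw1 : w 1 = y 1 := by rw [hwdef]; simp [hμ1, Nat.one_ne_zero]
  have hwμ : w μ = y μ := by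
    rw [hwdef]; simp [Nat.one_le_iff_ne_zero.mp hμ1, le_refl]
  have hwμ1 : w (μ+1) = c / r2 := by
    rw [hwdef]; simp [Nat.succ_ne_zero, Nat.not_succ_le_self]
  -- the sum identity for y
  have hsum : hFun c r1 r2 μ y = ∑ i ∈ Finset.Icc 1 (μ+1), c * (w (i-1) / w i) := by
    rw [sumsplit μ hμ1]
    unfold hFun
    rw [mul_add, Finset.mul_sum]
    have t2 : ∀ i ∈ Finset.Icc 2 μ, c * (w (i-1) / w i) = c * (y (i-1) / y i) := by
      intro i hi
      rw [Finset.mem_Icc] at hi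
      have e1 : w (i-1) = y (i-1) := by
        rw [hwdef]
        have : i - 1 ≠ 0 := by omega
        have : i - 1 ≤ μ := by omega
        simp_all
      have e2 : w i = y i := by
        rw [hwdef]
        have : i ≠ 0 := by omega
        simp_all
      rw [e1, e2]
    rw [Finset.sum_congr rfl t2]
    norm_num
    rw [hw0, hw1, hwμ, hwμ1]
    have : y μ * r2 = c * (y μ / (c / r2)) := by field_simp
    rw [this]
  have hcardIcc : (Finset.Icc 1 (μ+1)).card = μ + 1 := by
    rw [Nat.card_Icc]; omega
  -- the product telescopes
  have hprod : ∏ i ∈ Finset.Icc 1 (μ+1), c * (w (i-1) / w i) = c ^ (μ:ℝ) * r1 * r2 := by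
    have := tele w (μ+1) (fun i _ => (hw i).ne')
    calc ∏ i ∈ Finset.Icc 1 (μ+1), c * (w (i-1) / w i)
        = (∏ _i ∈ Finset.Icc 1 (μ+1), c) * ∏ i ∈ Finset.Icc 1 (μ+1), (w (i-1) / w i) := by
          rw [← Finset.prod_mul_distrib]
      _ = c ^ (μ+1) * (w 0 / w (μ+1)) := by
          rw [this, Finset.prod_const, hcardIcc]
      _ = c ^ (μ:ℝ) * r1 * r2 := by
          rw [hw0, hwμ1, Real.rpow_natCast]
          field_simp
          ring
  -- AM-GM lower bound
  have hAM := myAMGM (Finset.Icc 1 (μ+1)) (fun i => c * (w (i-1) / w i))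
      (fun i _ => by have := hw (i-1); have := hw i; positivity)
      (by rw [hcardIcc]; omega)
  rw [hcardIcc, hprod] at hAM
  have hcast : ((μ + 1 : ℕ) : ℝ) = (μ:ℝ) + 1 := by push_cast; ring
  rw [hcast] at hAM
  have hlow : ((μ:ℝ) + 1) * G ≤ hFun c r1 r2 μ y := by
    rw [hsum]; exact hAM
  -- value at xStar
  have hstar : hFun c r1 r2 μ (xStar c r1 r2 μ) = ((μ:ℝ) + 1) * G := by
    unfold hFun
    rw [mul_add, Finset.mul_sum]
    have t1 : c * (r1 / xStar c r1 r2 μ 1) = G := by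
      rw [← mul_div_assoc]; exact term_a hc0 hr1 hr2
    have t2 : ∀ i ∈ Finset.Icc 2 μ, c * (xStar c r1 r2 μ (i-1) / xStar c r1 r2 μ i) = G := by
      intro i hi
      rw [Finset.mem_Icc] at hi
      exact term_b hc0 hr1 hr2 i (by omega)
    have t3 : xStar c r1 r2 μ μ * r2 = G := term_c hc0 hr1 hr2
    rw [Finset.sum_congr rfl t2, t1, t3, Finset.sum_const, Nat.card_Icc, nsmul_eq_mul]
    have : ((μ + 1 - 2 : ℕ) : ℝ) = (μ:ℝ) - 1 := by
      have h : μ + 1 - 2 = μ - 1 := by omega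
      rw [h, Nat.cast_sub hμ1, Nat.cast_one]
    rw [this]
    ring
  rw [hstar]
  exact hlow
end

section
/- Let c>1 and μ≥2, and let r_2 satisfy c^{−1/(μ−1)} ≤ r_2 ≤ c. The set X = {(c/r_2)^{(i−1)/μ} : i=1,…,μ} (with x_1=1) has multiplicative approximation ratio with respect to f(x)=c/x on [1,c] equal to max{ (c/r_2)^{1/(2μ)}, c·(r_2/c)^{(μ−1)/μ} }. -/
open Set Finset Real

set_option maxHeartbeats 2000000 in
theorem stmt10 (c : ℝ) (hc : 1 < c) (μ : ℕ) (hμ : 2 ≤ μ) (r2 : ℝ)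
    (hr2l : c ^ (-(1 : ℝ) / ((μ : ℝ) - 1)) ≤ r2) (hr2u : r2 ≤ c) :
    approxRatio (fun x => c / x) 1 c
      {y | ∃ i : ℕ, 1 ≤ i ∧ i ≤ μ ∧ y = (c / r2) ^ (((i : ℝ) - 1) / (μ : ℝ))}
      = max ((c / r2) ^ ((1 : ℝ) / (2 * (μ : ℝ))))
          (c * (r2 / c) ^ (((μ : ℝ) - 1) / (μ : ℝ))) := by
  classical
  have hm2 : (2:ℝ) ≤ (μ:ℝ) := by exact_mod_cast hμ
  have hm0 : (0:ℝ) < (μ:ℝ) := by linarith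
  have hm1 : (0:ℝ) < (μ:ℝ) - 1 := by linarith
  have hc0 : (0:ℝ) < c := by linarith
  have hr2pos : 0 < r2 := lt_of_lt_of_le (Real.rpow_pos_of_pos hc0 _) hr2l
  set m : ℝ := (μ:ℝ) with hmdef
  set q : ℝ := c / r2 with hqdef
  have hq0 : 0 < q := div_pos hc0 hr2pos
  have hq1 : 1 ≤ q := (one_le_div hr2pos).mpr hr2u
  set A : ℝ := q ^ ((1:ℝ)/(2*m)) with hAdef
  set B : ℝ := c * (r2 / c) ^ ((m-1)/m) with hBdef
  set Q : ℝ := q ^ ((m-1)/m) with hQdef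
  have hQpos : 0 < Q := Real.rpow_pos_of_pos hq0 _
  have hApos : 0 < A := Real.rpow_pos_of_pos hq0 _
  have honele : ∀ e : ℝ, 0 ≤ e → 1 ≤ q ^ e := by
    intro e he
    rw [← Real.rpow_zero q]
    exact Real.rpow_le_rpow_of_exponent_le hq1 he
  have hA1 : 1 ≤ A := honele _ (by positivity)
  have hQ1 : 1 ≤ Q := honele _ (by positivity)
  -- Q ≤ c
  have hqc : q ≤ c ^ (m/(m-1)) := by
    have h2 : c / r2 ≤ c / c ^ (-(1:ℝ)/(m-1)) := by
      gcongr
    calc q ≤ c / c ^ (-(1:ℝ)/(m-1)) := h2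
      _ = c ^ ((1:ℝ) - (-(1:ℝ)/(m-1))) := by
          rw [Real.rpow_sub hc0, Real.rpow_one]
      _ = c ^ (m/(m-1)) := by
          congr 1
          have h3 : m - 1 ≠ 0 := by linarith
          field_simp
          ring
  have hQc : Q ≤ c := by
    calc Q = q ^ ((m-1)/m) := rfl
      _ ≤ (c ^ (m/(m-1))) ^ ((m-1)/m) :=
          Real.rpow_le_rpow hq0.le hqc (by positivity)
      _ = c ^ ((m/(m-1)) * ((m-1)/m)) := (Real.rpow_mul hc0.le _ _).symm
      _ = c := by
          rw [show (m/(m-1)) * ((m-1)/m) = 1 from by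
            field_simp
            try rw [mul_comm]
            try exact div_self (by nlinarith),
            Real.rpow_one]
  have hBQ : B = c / Q := by
    rw [hBdef, hQdef, show r2 / c = q⁻¹ by rw [hqdef, inv_div],
      Real.inv_rpow hq0.le]
    ring
  have hB1 : 1 ≤ B := by rw [hBQ]; exact (one_le_div hQpos).mpr hQc
  set δ : ℝ := max A B with hδdef
  have hδA : A ≤ δ := le_max_left _ _
  have hδB : B ≤ δ := le_max_right _ _
  have hδ1 : 1 ≤ δ := le_trans hA1 hδA
  have hδ0 : 0 < δ := by linarith
  have hδQc : c ≤ δ * Q := by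
    have h : c / Q ≤ δ := hBQ ▸ hδB
    exact (div_le_iff₀ hQpos).mp h
  have hAA : A * A = q ^ ((1:ℝ)/m) := by
    rw [hAdef, ← Real.rpow_add hq0]
    congr 1
    field_simp; norm_num
  have hAAδ : q ^ ((1:ℝ)/m) ≤ δ * δ := by
    rw [← hAA]
    exact mul_le_mul hδA hδA hApos.le hδ0.le
  set X : Set ℝ := {y | ∃ i : ℕ, 1 ≤ i ∧ i ≤ μ ∧ y = q ^ (((i : ℝ) - 1) / m)} with hXdef
  -- membership: δ works
  have hmem : IsApprox (fun x => c / x) 1 c X δ := by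
    refine ⟨hδ1, ?_⟩
    rintro x ⟨hx1, hxc⟩
    have hx0 : 0 < x := by linarith
    have hcast : ((μ - 1 : ℕ):ℝ) = m - 1 := by
      rw [Nat.cast_sub (by omega : 1 ≤ μ), Nat.cast_one, hmdef]
    have hPtop : x ≤ δ * q ^ (((μ - 1 : ℕ):ℝ)/m) := by
      rw [hcast]
      calc x ≤ c := hxc
        _ ≤ δ * Q := hδQc
        _ = δ * q ^ ((m-1)/m) := rfl
    have hEx : ∃ n : ℕ, x ≤ δ * q ^ ((n:ℝ)/m) := ⟨μ - 1, hPtop⟩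
    set n₀ : ℕ := Nat.find hEx with hn₀def
    have hspec : x ≤ δ * q ^ ((n₀:ℝ)/m) := Nat.find_spec hEx
    have hn₀le : n₀ ≤ μ - 1 := Nat.find_le hPtop
    set y : ℝ := q ^ ((n₀:ℝ)/m) with hydef
    have hy0 : 0 < y := Real.rpow_pos_of_pos hq0 _
    have hymem : y ∈ X := by
      refine ⟨n₀ + 1, by omega, by omega, ?_⟩
      rw [hydef]
      congr 1
      push_cast
      ring
    have hyx : y ≤ δ * x := by
      rcases Nat.eq_zero_or_pos n₀ with h0 | hpos
      · rw [hydef, h0]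
        norm_num
        nlinarith
      · obtain ⟨k, hk⟩ : ∃ k, n₀ = k + 1 := ⟨n₀ - 1, by omega⟩
        have hnot : ¬ x ≤ δ * q ^ ((k:ℝ)/m) := Nat.find_min hEx (by omega)
        push_neg at hnot
        have hqk : 0 < q ^ ((k:ℝ)/m) := Real.rpow_pos_of_pos hq0 _
        calc y = q ^ ((k:ℝ)/m) * q ^ ((1:ℝ)/m) := by
              rw [hydef, ← Real.rpow_add hq0, hk]
              congr 1
              push_cast
              ring
          _ ≤ q ^ ((k:ℝ)/m) * (δ * δ) :=
              mul_le_mul_of_nonneg_left hAAδ hqk.le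
          _ = δ * (δ * q ^ ((k:ℝ)/m)) := by ring
          _ ≤ δ * x := mul_le_mul_of_nonneg_left hnot.le hδ0.le
    refine ⟨y, hymem, hspec, ?_⟩
    show c / x ≤ δ * (c / y)
    rw [div_le_iff₀ hx0, show δ * (c / y) * x = c * (δ * x) / y from by ring,
      le_div_iff₀ hy0]
    exact mul_le_mul_of_nonneg_left hyx hc0.le
  -- lower bound
  have hlow : ∀ b ∈ {d : ℝ | IsApprox (fun x => c / x) 1 c X d}, δ ≤ b := by
    intro b hb
    obtain ⟨hb1, hball⟩ := hb
    have hb0 : 0 < b := by linarith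
    refine max_le ?_ ?_
    · -- A ≤ b, test point A
      have hAc : A ≤ c := by
        calc A ≤ Q := by
              rw [hAdef, hQdef]
              apply Real.rpow_le_rpow_of_exponent_le hq1
              rw [div_le_div_iff₀ (by positivity) hm0]
              nlinarith
          _ ≤ c := hQc
      obtain ⟨y, ⟨i, hi1, hiμ, hyeq⟩, h1, h2⟩ := hball A ⟨hA1, hAc⟩
      have hy0 : 0 < y := by rw [hyeq]; exact Real.rpow_pos_of_pos hq0 _
      have h2' : y ≤ b * A := by
        have h3 := mul_le_mul_of_nonneg_right h2 (show (0:ℝ) ≤ A * y by positivity)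
        rw [show c / A * (A * y) = c * y from by field_simp,
          show b * (c / y) * (A * y) = c * (b * A) from by field_simp] at h3
        exact le_of_mul_le_mul_left h3 hc0
      rcases eq_or_lt_of_le hi1 with heq | hlt
      · -- i = 1, y = 1
        have hy1 : y = 1 := by
          rw [hyeq, ← heq]
          norm_num
        rw [hy1, mul_one] at h1
        exact h1
      · -- 2 ≤ i
        have hi2 : (2:ℝ) ≤ (i:ℝ) := by exact_mod_cast hlt
        have hylb : q ^ ((1:ℝ)/m) ≤ y := by
          rw [hyeq]
          apply Real.rpow_le_rpow_of_exponent_le hq1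
          rw [div_le_div_iff₀ hm0 hm0]
          nlinarith
        have h4 : A * A ≤ b * A := by
          rw [hAA]
          exact le_trans hylb h2'
        exact le_of_mul_le_mul_right h4 hApos
    · -- B ≤ b, test point c
      obtain ⟨y, ⟨i, hi1, hiμ, hyeq⟩, h1, _⟩ := hball c ⟨hc.le, le_refl c⟩
      have him : (i:ℝ) ≤ m := by rw [hmdef]; exact_mod_cast hiμ
      have hyQ : y ≤ Q := by
        rw [hyeq, hQdef]
        apply Real.rpow_le_rpow_of_exponent_le hq1
        rw [div_le_div_iff₀ hm0 hm0]
        nlinarith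
      have h5 : c ≤ b * Q := by
        calc c ≤ b * y := h1
          _ ≤ b * Q := by nlinarith
      rw [hBQ]
      exact (div_le_iff₀ hQpos).mpr (by linarith)
  show sInf {d : ℝ | IsApprox (fun x => c / x) 1 c X d} = δ
  apply le_antisymm
  · exact csInf_le ⟨δ, hlow⟩ hmem
  · exact le_csInf ⟨δ, hmem⟩ hlow
end

section
/- Let c>1 and μ≥2, and let r_1 satisfy c^{−1/(μ−1)} ≤ r_1 ≤ c. The set X = {r_1·(c/r_1)^{i/μ} : i=1,…,μ} (with x_μ=c) has multiplicative approximation ratio with respect to f(x)=c/x on [1,c] equal to max{ (c/r_1)^{1/(2μ)}, (c·r_1^{μ−1})^{1/μ} }. -/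
open Set Finset Real

private lemma div_key2 {c x y δ : ℝ} (hc : 0 ≤ c) (hx : 0 < x) (hy : 0 < y)
    (h : y ≤ δ * x) : c / x ≤ δ * (c / y) := by
  rw [← mul_div_assoc, div_le_div_iff₀ hx hy]
  calc c * y ≤ c * (δ * x) := mul_le_mul_of_nonneg_left h hc
  _ = δ * c * x := by ring

private lemma div_key3 {c x y δ : ℝ} (hc : 0 < c) (hx : 0 < x) (hy : 0 < y)
    (h : c / x ≤ δ * (c / y)) : y ≤ δ * x := by
  rw [← mul_div_assoc, div_le_div_iff₀ hx hy] at h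
  have h2 : c * y ≤ c * (δ * x) := by linarith [h]; 
  exact le_of_mul_le_mul_left h2 hc

theorem stmt11 (c : ℝ) (hc : 1 < c) (μ : ℕ) (hμ : 2 ≤ μ) (r1 : ℝ)
    (hr1l : c ^ (-(1 : ℝ) / ((μ : ℝ) - 1)) ≤ r1) (hr1u : r1 ≤ c) :
    approxRatio (fun x => c / x) 1 c
      {y | ∃ i : ℕ, 1 ≤ i ∧ i ≤ μ ∧ y = r1 * (c / r1) ^ ((i : ℝ) / (μ : ℝ))}
      = max ((c / r1) ^ ((1 : ℝ) / (2 * (μ : ℝ))))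
          ((c * r1 ^ ((μ : ℝ) - 1)) ^ ((1 : ℝ) / (μ : ℝ))) := by
  have hμ2 : (2:ℝ) ≤ (μ:ℝ) := by exact_mod_cast hμ
  have hμ1 : (1:ℝ) ≤ (μ:ℝ) - 1 := by linarith
  have hμR : (0:ℝ) < (μ:ℝ) := by linarith
  have hcpos : (0:ℝ) < c := by linarith
  have hr1pos : 0 < r1 := lt_of_lt_of_le (Real.rpow_pos_of_pos hcpos _) hr1l
  set b := c / r1 with hbdef
  have hbpos : 0 < b := div_pos hcpos hr1pos
  have hb1 : 1 ≤ b := (one_le_div hr1pos).2 hr1u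
  have hc_eq : r1 * b ^ ((μ:ℝ)/(μ:ℝ)) = c := by
    rw [div_self hμR.ne', Real.rpow_one, hbdef]; field_simp
  have hgmono : ∀ s t : ℝ, s ≤ t → r1 * b ^ (s/(μ:ℝ)) ≤ r1 * b ^ (t/(μ:ℝ)) := by
    intro s t hst
    exact mul_le_mul_of_nonneg_left
      (Real.rpow_le_rpow_of_exponent_le hb1 (by apply div_le_div_of_nonneg_right hst hμR.le)) hr1pos.le
  have hsplit : ∀ u v : ℝ, b ^ ((u+v)/(μ:ℝ)) = b ^ (u/(μ:ℝ)) * b ^ (v/(μ:ℝ)) := by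
    intro u v; rw [add_div, Real.rpow_add hbpos]
  have hAd : b ^ ((1/2:ℝ)/(μ:ℝ)) = b ^ ((1:ℝ)/(2*(μ:ℝ))) := by
    norm_num [div_div]
  have hB_eq : (c * r1 ^ ((μ:ℝ)-1)) ^ ((1:ℝ)/(μ:ℝ)) = r1 * b ^ ((1:ℝ)/(μ:ℝ)) := by
    have h1 : c * r1 ^ ((μ:ℝ)-1) = r1 ^ (μ:ℝ) * b := by
      rw [Real.rpow_sub hr1pos, Real.rpow_one, hbdef]; field_simp
    rw [h1, Real.mul_rpow (by positivity) hbpos.le]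
    rw [← Real.rpow_mul hr1pos.le, mul_one_div, div_self hμR.ne', Real.rpow_one]
  have hBg : 1 ≤ r1 * b ^ ((1:ℝ)/(μ:ℝ)) := by
    rw [← hB_eq]
    have h2 : (1:ℝ) ≤ c * r1 ^ ((μ:ℝ)-1) := by
      have h3 : (c ^ (-(1:ℝ) / ((μ:ℝ) - 1))) ^ ((μ:ℝ)-1) ≤ r1 ^ ((μ:ℝ)-1) :=
        Real.rpow_le_rpow (by positivity) hr1l (by linarith)
      rw [← Real.rpow_mul hcpos.le] at h3
      have h4 : (-(1:ℝ) / ((μ:ℝ) - 1)) * ((μ:ℝ)-1) = -1 := by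
        field_simp
      rw [h4, Real.rpow_neg_one] at h3
      have := mul_le_mul_of_nonneg_left h3 hcpos.le
      rwa [mul_inv_cancel₀ hcpos.ne'] at this
    calc (1:ℝ) = 1 ^ ((1:ℝ)/(μ:ℝ)) := (Real.one_rpow _).symm
    _ ≤ (c * r1 ^ ((μ:ℝ)-1)) ^ ((1:ℝ)/(μ:ℝ)) := Real.rpow_le_rpow zero_le_one h2 (by positivity)
  have hA1 : 1 ≤ b ^ ((1:ℝ)/(2*(μ:ℝ))) := by
    calc (1:ℝ) = b ^ (0:ℝ) := (Real.rpow_zero b).symm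
    _ ≤ b ^ ((1:ℝ)/(2*(μ:ℝ))) := Real.rpow_le_rpow_of_exponent_le hb1 (by positivity)
  set δ0 := max (b ^ ((1:ℝ)/(2*(μ:ℝ)))) ((c * r1 ^ ((μ:ℝ)-1)) ^ ((1:ℝ)/(μ:ℝ))) with hδ0def
  have hδ01 : 1 ≤ δ0 := le_trans hA1 (le_max_left _ _)
  have hδ0A : b ^ ((1:ℝ)/(2*(μ:ℝ))) ≤ δ0 := le_max_left _ _
  have hδ0B : r1 * b ^ ((1:ℝ)/(μ:ℝ)) ≤ δ0 := hB_eq ▸ le_max_right _ _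
  -- upper bound: δ0 is a valid approximation factor
  have hmem : IsApprox (fun x => c / x) 1 c
      {y | ∃ i : ℕ, 1 ≤ i ∧ i ≤ μ ∧ y = r1 * b ^ ((i : ℝ) / (μ : ℝ))} δ0 := by
    refine ⟨hδ01, ?_⟩
    rintro x ⟨hx1, hxc⟩
    have hxpos : 0 < x := by linarith
    by_cases hxB : x ≤ r1 * b ^ (((1:ℕ):ℝ)/(μ:ℝ))
    · refine ⟨r1 * b ^ (((1:ℕ):ℝ)/(μ:ℝ)), ⟨1, le_refl _, by omega, rfl⟩, ?_, ?_⟩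
      · calc x ≤ r1 * b ^ (((1:ℕ):ℝ)/(μ:ℝ)) := hxB
        _ ≤ δ0 * (r1 * b ^ (((1:ℕ):ℝ)/(μ:ℝ))) := le_mul_of_one_le_left (by positivity) hδ01
      · refine div_key2 hcpos.le hxpos (by positivity) ?_
        have h6 : r1 * b ^ (((1:ℕ):ℝ)/(μ:ℝ)) ≤ δ0 := by push_cast; exact hδ0B
        calc r1 * b ^ (((1:ℕ):ℝ)/(μ:ℝ)) ≤ δ0 := h6
        _ ≤ δ0 * x := le_mul_of_one_le_right (by linarith) hx1
    · push_neg at hxB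
      have hb_gt : 1 < b := by
        rcases lt_or_eq_of_le hb1 with h | h
        · exact h
        · exfalso
          rw [← h, Real.one_rpow, mul_one] at hxB
          have hcr : c = r1 := by
            have h2 : c / r1 = 1 := h.symm
            field_simp at h2; linarith
          linarith
      have hlogb : 0 < Real.log b := Real.log_pos hb_gt
      set s := (μ:ℝ) * Real.log (x / r1) / Real.log b with hsdef
      have hsx : r1 * b ^ (s/(μ:ℝ)) = x := by
        have h1 : s / (μ:ℝ) = Real.log (x/r1) / Real.log b := by
          rw [hsdef]; field_simp
        rw [h1, Real.rpow_def_of_pos hbpos, mul_comm (Real.log b),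
          div_mul_cancel₀ _ hlogb.ne', Real.exp_log (div_pos hxpos hr1pos)]
        field_simp
      have hs1 : 1 < s := by
        have h1 : r1 * b ^ ((1:ℝ)/(μ:ℝ)) < r1 * b ^ (s/(μ:ℝ)) := by
          rw [hsx]; exact_mod_cast hxB
        have h2 : b ^ ((1:ℝ)/(μ:ℝ)) < b ^ (s/(μ:ℝ)) :=
          lt_of_mul_lt_mul_left h1 hr1pos.le
        have h3 := (Real.rpow_lt_rpow_left_iff hb_gt).1 h2
        rwa [div_lt_div_iff_of_pos_right hμR] at h3
      have hsμ : s ≤ (μ:ℝ) := by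
        have h1 : r1 * b ^ (s/(μ:ℝ)) ≤ r1 * b ^ ((μ:ℝ)/(μ:ℝ)) := by
          rw [hsx, hc_eq]; exact hxc
        have h2 : b ^ (s/(μ:ℝ)) ≤ b ^ ((μ:ℝ)/(μ:ℝ)) :=
          le_of_mul_le_mul_left h1 hr1pos
        have h3 := (Real.rpow_le_rpow_left_iff hb_gt).1 h2
        rwa [div_le_div_iff_of_pos_right hμR] at h3
      set i := ⌈s⌉₊ with hidef
      have hs_le_i : s ≤ (i:ℝ) := Nat.le_ceil s
      have hi_lt : (i:ℝ) < s + 1 := Nat.ceil_lt_add_one (by linarith)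
      have hi1 : 1 ≤ i := Nat.one_le_ceil_iff.2 (by linarith)
      have hiμ : i ≤ μ := Nat.ceil_le.2 (by exact_mod_cast hsμ)
      by_cases hhalf : s ≤ (i:ℝ) - 1/2
      · have hi2 : 2 ≤ i := by
          have h2 : (1:ℕ) < i := by exact_mod_cast show ((1:ℕ):ℝ) < (i:ℝ) by push_cast; linarith
          omega
        have hcast : ((i-1:ℕ):ℝ) = (i:ℝ) - 1 := by
          rw [Nat.cast_sub hi1, Nat.cast_one]
        refine ⟨r1 * b ^ (((i-1:ℕ):ℝ)/(μ:ℝ)), ⟨i-1, by omega, by omega, rfl⟩, ?_, ?_⟩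
        · rw [hcast]
          calc x = r1 * b ^ (s/(μ:ℝ)) := hsx.symm
          _ ≤ r1 * b ^ ((((i:ℝ)-1) + 1/2)/(μ:ℝ)) := hgmono _ _ (by linarith)
          _ = (r1 * b ^ (((i:ℝ)-1)/(μ:ℝ))) * b ^ ((1/2:ℝ)/(μ:ℝ)) := by
              rw [hsplit]; ring
          _ ≤ (r1 * b ^ (((i:ℝ)-1)/(μ:ℝ))) * δ0 := by
              apply mul_le_mul_of_nonneg_left _ (by positivity)
              rw [hAd]; exact hδ0A
          _ = δ0 * (r1 * b ^ (((i:ℝ)-1)/(μ:ℝ))) := by ring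
        · rw [hcast]
          refine div_key2 hcpos.le hxpos (by positivity) ?_
          calc r1 * b ^ (((i:ℝ)-1)/(μ:ℝ)) ≤ r1 * b ^ (s/(μ:ℝ)) := hgmono _ _ (by linarith)
          _ = x := hsx
          _ ≤ δ0 * x := le_mul_of_one_le_left hxpos.le hδ01
      · push_neg at hhalf
        refine ⟨r1 * b ^ (((i:ℕ):ℝ)/(μ:ℝ)), ⟨i, hi1, hiμ, rfl⟩, ?_, ?_⟩
        · calc x = r1 * b ^ (s/(μ:ℝ)) := hsx.symm
          _ ≤ r1 * b ^ (((i:ℕ):ℝ)/(μ:ℝ)) := hgmono _ _ hs_le_i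
          _ ≤ δ0 * (r1 * b ^ (((i:ℕ):ℝ)/(μ:ℝ))) := le_mul_of_one_le_left (by positivity) hδ01
        · refine div_key2 hcpos.le hxpos (by positivity) ?_
          calc r1 * b ^ (((i:ℕ):ℝ)/(μ:ℝ)) ≤ r1 * b ^ ((s + 1/2)/(μ:ℝ)) :=
              hgmono _ _ (by linarith)
          _ = (r1 * b ^ (s/(μ:ℝ))) * b ^ ((1/2:ℝ)/(μ:ℝ)) := by rw [hsplit]; ring
          _ = x * b ^ ((1/2:ℝ)/(μ:ℝ)) := by rw [hsx]
          _ ≤ x * δ0 := by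
              apply mul_le_mul_of_nonneg_left _ hxpos.le
              rw [hAd]; exact hδ0A
          _ = δ0 * x := by ring
  -- lower bound
  have hlb : ∀ δ : ℝ, IsApprox (fun x => c / x) 1 c
      {y | ∃ i : ℕ, 1 ≤ i ∧ i ≤ μ ∧ y = r1 * b ^ ((i : ℝ) / (μ : ℝ))} δ → δ0 ≤ δ := by
    intro δ hδ
    obtain ⟨hδ1, hδ2⟩ := hδ
    apply max_le
    · -- A ≤ δ
      rcases eq_or_lt_of_le hb1 with h | hb_gt
      · rw [← h, Real.one_rpow]; exact hδ1
      · set d := b ^ ((1:ℝ)/(2*(μ:ℝ))) with hddef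
        have hdpos : 0 < d := by positivity
        have hd1 : 1 ≤ d := hA1
        have hμm1 : (0:ℝ) < (μ:ℝ) - 1 := by linarith
        have hdc : d ≤ c := by
          have step1 : b ≤ c ^ ((1:ℝ) + 1/((μ:ℝ)-1)) := by
            have h1 : c / r1 ≤ c / c ^ (-(1:ℝ)/((μ:ℝ)-1)) :=
              div_le_div_of_nonneg_left hcpos.le (Real.rpow_pos_of_pos hcpos _) hr1l
            calc b ≤ c / c ^ (-(1:ℝ)/((μ:ℝ)-1)) := h1
            _ = c ^ ((1:ℝ) - (-(1:ℝ)/((μ:ℝ)-1))) := by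
                rw [Real.rpow_sub hcpos, Real.rpow_one]
            _ = c ^ ((1:ℝ) + 1/((μ:ℝ)-1)) := by ring_nf
          calc d ≤ (c ^ ((1:ℝ) + 1/((μ:ℝ)-1))) ^ ((1:ℝ)/(2*(μ:ℝ))) :=
              Real.rpow_le_rpow hbpos.le step1 (by positivity)
          _ = c ^ (((1:ℝ) + 1/((μ:ℝ)-1)) * ((1:ℝ)/(2*(μ:ℝ)))) := by
              rw [← Real.rpow_mul hcpos.le]
          _ ≤ c ^ (1:ℝ) := by
              apply Real.rpow_le_rpow_of_exponent_le hc.le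
              have heq : ((1:ℝ) + 1/((μ:ℝ)-1)) * ((1:ℝ)/(2*(μ:ℝ))) = 1/(2*((μ:ℝ)-1)) := by
                field_simp; ring
              rw [heq, div_le_one (by linarith)]
              linarith
          _ = c := Real.rpow_one c
        set x0 := c / d with hx0def
        have hx0pos : 0 < x0 := by positivity
        have hx01 : 1 ≤ x0 := (one_le_div hdpos).2 hdc
        have hx0c : x0 ≤ c := div_le_self hcpos.le hd1
        obtain ⟨y, ⟨i, hi1, hiμ, rfl⟩, ha, hb2⟩ := hδ2 x0 ⟨hx01, hx0c⟩
        have hypos : 0 < r1 * b ^ (((i:ℕ):ℝ)/(μ:ℝ)) := by positivity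
        have hb2' : r1 * b ^ (((i:ℕ):ℝ)/(μ:ℝ)) ≤ δ * x0 := div_key3 hcpos hx0pos hypos hb2
        have hδpos : 0 < δ := by linarith
        by_cases hi : i = μ
        · subst hi
          rw [hc_eq] at hb2'
          -- c ≤ δ * (c/d)  ⟹  d ≤ δ
          rw [hx0def] at hb2'
          have h5 : c * d ≤ c * δ := by
            have h6 := mul_le_mul_of_nonneg_right hb2' hdpos.le
            rw [mul_assoc, div_mul_cancel₀ _ hdpos.ne'] at h6
            linarith [h6]
          exact le_of_mul_le_mul_left h5 hcpos
        · have hile : (i:ℝ) ≤ (μ:ℝ) - 1 := by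
            have h6 : i ≤ μ - 1 := by omega
            have h7 : ((i:ℕ):ℝ) ≤ ((μ-1:ℕ):ℝ) := by exact_mod_cast h6
            rwa [Nat.cast_sub (by omega), Nat.cast_one] at h7
          have hyle : r1 * b ^ (((i:ℕ):ℝ)/(μ:ℝ)) ≤ r1 * b ^ (((μ:ℝ)-1)/(μ:ℝ)) :=
            hgmono _ _ hile
          have hdd : d * d = b ^ ((1:ℝ)/(μ:ℝ)) := by
            rw [hddef, ← Real.rpow_add hbpos]; congr 1; ring
          have h9 : (r1 * b ^ (((μ:ℝ)-1)/(μ:ℝ))) * d * d = c := by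
            rw [mul_assoc, hdd, mul_assoc, ← hsplit]
            have h10 : (μ:ℝ) - 1 + 1 = (μ:ℝ) := by ring
            rw [h10]; exact hc_eq
          have hx0eq : x0 = (r1 * b ^ (((μ:ℝ)-1)/(μ:ℝ))) * d := by
            rw [hx0def, div_eq_iff hdpos.ne']
            exact h9.symm ▸ rfl
          have h8 : 0 < r1 * b ^ (((μ:ℝ)-1)/(μ:ℝ)) := by positivity
          have h7 : (r1 * b ^ (((μ:ℝ)-1)/(μ:ℝ))) * d ≤ (r1 * b ^ (((μ:ℝ)-1)/(μ:ℝ))) * δ := by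
            calc (r1 * b ^ (((μ:ℝ)-1)/(μ:ℝ))) * d = x0 := hx0eq.symm
            _ ≤ δ * (r1 * b ^ (((i:ℕ):ℝ)/(μ:ℝ))) := ha
            _ ≤ δ * (r1 * b ^ (((μ:ℝ)-1)/(μ:ℝ))) :=
                mul_le_mul_of_nonneg_left hyle hδpos.le
            _ = (r1 * b ^ (((μ:ℝ)-1)/(μ:ℝ))) * δ := by ring
          exact le_of_mul_le_mul_left h7 h8
    · -- B ≤ δ
      obtain ⟨y, ⟨i, hi1, hiμ, rfl⟩, ha, hb2⟩ := hδ2 1 ⟨le_refl 1, hc.le⟩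
      have hypos : 0 < r1 * b ^ (((i:ℕ):ℝ)/(μ:ℝ)) := by positivity
      have hb2' : r1 * b ^ (((i:ℕ):ℝ)/(μ:ℝ)) ≤ δ * 1 := div_key3 hcpos one_pos hypos hb2
      rw [mul_one] at hb2'
      rw [hB_eq]
      calc r1 * b ^ ((1:ℝ)/(μ:ℝ)) ≤ r1 * b ^ (((i:ℕ):ℝ)/(μ:ℝ)) :=
        hgmono _ _ (by exact_mod_cast hi1)
      _ ≤ δ := hb2'
  -- conclude
  apply le_antisymm
  · exact csInf_le ⟨1, fun δ hδ => hδ.1⟩ hmem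
  · exact le_csInf ⟨δ0, hmem⟩ hlb
end

section
/- For the front f(x)=2/x on [1,2] and μ=10, the optimal 10-point approximation distribution (without requiring extreme points) is {2^{1/20}, 2^{3/20}, 2^{5/20}, …, 2^{19/20}}, achieving the optimal approximation ratio 2^{1/20}. -/
open Set Finset Real
open MeasureTheory

lemma step_aux (x : ℝ) (i : ℕ) (hx : 0 < x)
    (hlo : (2:ℝ) ^ ((2*(i:ℝ)-2)/20) ≤ x) (hhi : x ≤ (2:ℝ) ^ ((2*(i:ℝ))/20)) :
    x ≤ (2:ℝ) ^ ((1:ℝ)/20) * (2:ℝ) ^ ((2*(i:ℝ)-1)/20) ∧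
      2/x ≤ (2:ℝ) ^ ((1:ℝ)/20) * (2 / (2:ℝ) ^ ((2*(i:ℝ)-1)/20)) := by
  have h2 : (0:ℝ) < 2 := by norm_num
  have hy : (0:ℝ) < (2:ℝ) ^ ((2*(i:ℝ)-1)/20) := Real.rpow_pos_of_pos h2 _
  have hmul : (2:ℝ) ^ ((1:ℝ)/20) * (2:ℝ) ^ ((2*(i:ℝ)-1)/20) = (2:ℝ) ^ ((2*(i:ℝ))/20) := by
    rw [← Real.rpow_add h2]; ring_nf
  have hmul2 : (2:ℝ) ^ ((1:ℝ)/20) * x ≥ (2:ℝ) ^ ((2*(i:ℝ)-1)/20) := by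
    calc (2:ℝ) ^ ((2*(i:ℝ)-1)/20) = (2:ℝ) ^ ((1:ℝ)/20) * (2:ℝ) ^ ((2*(i:ℝ)-2)/20) := by
          rw [← Real.rpow_add h2]; ring_nf
    _ ≤ (2:ℝ) ^ ((1:ℝ)/20) * x := by
          apply mul_le_mul_of_nonneg_left hlo (le_of_lt (Real.rpow_pos_of_pos h2 _))
  constructor
  · rw [hmul]; exact hhi
  · rw [mul_div_assoc', div_le_div_iff₀ hx hy]
    nlinarith [Real.rpow_pos_of_pos h2 ((1:ℝ)/20)]

lemma lower_bound (Y : Set ℝ) (hYsub : Y ⊆ Set.Icc 1 2) (hYfin : Y.Finite)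
    (hYcard : Y.ncard = 10) (δ : ℝ) (hδ1 : 1 ≤ δ)
    (hcov : ∀ x ∈ Set.Icc (1:ℝ) 2, ∃ y ∈ Y, x ≤ δ * y ∧ 2/x ≤ δ * (2/y)) :
    (2:ℝ) ^ ((1:ℝ)/20) ≤ δ := by
  have hδpos : (0:ℝ) < δ := lt_of_lt_of_le one_pos hδ1
  have hlogδ : 0 ≤ Real.log δ := Real.log_nonneg hδ1
  have cover : Set.Icc (0:ℝ) (Real.log 2) ⊆
      ⋃ y ∈ hYfin.toFinset, Set.Icc (Real.log y - Real.log δ) (Real.log y + Real.log δ) := by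
    intro t ht
    obtain ⟨ht0, ht2⟩ := ht
    have hexp : Real.exp t ∈ Set.Icc (1:ℝ) 2 := by
      constructor
      · calc (1:ℝ) = Real.exp 0 := (Real.exp_zero).symm
        _ ≤ Real.exp t := Real.exp_le_exp.mpr ht0
      · calc Real.exp t ≤ Real.exp (Real.log 2) := Real.exp_le_exp.mpr ht2
        _ = 2 := Real.exp_log (by norm_num)
    obtain ⟨y, hy, h1, h2⟩ := hcov _ hexp
    have hy12 := hYsub hy
    have hypos : (0:ℝ) < y := lt_of_lt_of_le one_pos hy12.1
    have hexppos : (0:ℝ) < Real.exp t := Real.exp_pos t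
    refine Set.mem_biUnion (hYfin.mem_toFinset.mpr hy) ?_
    constructor
    · have hyδx : y ≤ δ * Real.exp t := by
        rw [mul_div_assoc'] at h2
        rw [div_le_div_iff₀ hexppos hypos] at h2
        nlinarith
      have := Real.log_le_log (by positivity) hyδx
      rw [Real.log_mul (ne_of_gt hδpos) (ne_of_gt hexppos), Real.log_exp] at this
      linarith
    · have := Real.log_le_log hexppos h1
      rw [Real.log_mul (ne_of_gt hδpos) (ne_of_gt hypos), Real.log_exp] at this
      linarith
  have hm := measure_mono (μ := volume) cover
  have hunion : volume (⋃ y ∈ hYfin.toFinset,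
      Set.Icc (Real.log y - Real.log δ) (Real.log y + Real.log δ)) ≤
      10 * ENNReal.ofReal (2 * Real.log δ) := by
    calc volume (⋃ y ∈ hYfin.toFinset, Set.Icc (Real.log y - Real.log δ) (Real.log y + Real.log δ))
        ≤ ∑ y ∈ hYfin.toFinset, volume (Set.Icc (Real.log y - Real.log δ) (Real.log y + Real.log δ)) :=
          measure_biUnion_finset_le _ _
    _ = ∑ y ∈ hYfin.toFinset, ENNReal.ofReal (2 * Real.log δ) := by
          apply Finset.sum_congr rfl
          intro y _
          rw [Real.volume_Icc]
          congr 1; ring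
    _ = 10 * ENNReal.ofReal (2 * Real.log δ) := by
          rw [Finset.sum_const, nsmul_eq_mul]
          congr 1
          rw [← Set.ncard_eq_toFinset_card Y hYfin, hYcard]
          norm_num
  rw [Real.volume_Icc, sub_zero] at hm
  have key : Real.log 2 ≤ 20 * Real.log δ := by
    have h10 : (10 : ENNReal) * ENNReal.ofReal (2 * Real.log δ) = ENNReal.ofReal (20 * Real.log δ) := by
      rw [← ENNReal.ofReal_ofNat, ← ENNReal.ofReal_mul (by norm_num)]
      congr 1; ring
    have := le_trans hm hunion
    rw [h10] at this
    exact (ENNReal.ofReal_le_ofReal_iff (by linarith)).mp this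
  have : Real.log ((2:ℝ) ^ ((1:ℝ)/20)) ≤ Real.log δ := by
    rw [Real.log_rpow (by norm_num)]
    linarith
  calc (2:ℝ) ^ ((1:ℝ)/20) = Real.exp (Real.log ((2:ℝ) ^ ((1:ℝ)/20))) :=
        (Real.exp_log (by positivity)).symm
  _ ≤ Real.exp (Real.log δ) := Real.exp_le_exp.mpr this
  _ = δ := Real.exp_log hδpos

theorem stmt16 :
    approxRatio (fun x => 2 / x) 1 2
      {y | ∃ i : ℕ, 1 ≤ i ∧ i ≤ 10 ∧ y = (2 : ℝ) ^ ((2 * (i : ℝ) - 1) / 20)}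
      = (2 : ℝ) ^ ((1 : ℝ) / 20) ∧
    ∀ Y : Set ℝ, Y ⊆ Set.Icc 1 2 → Y.Finite → Y.ncard = 10 →
      (2 : ℝ) ^ ((1 : ℝ) / 20) ≤ approxRatio (fun x => 2 / x) 1 2 Y := by
  have h2 : (0:ℝ) < 2 := by norm_num
  have hδpos : (0:ℝ) < (2:ℝ) ^ ((1:ℝ)/20) := Real.rpow_pos_of_pos h2 _
  have hδ1 : (1:ℝ) ≤ (2:ℝ) ^ ((1:ℝ)/20) := Real.one_le_rpow one_le_two (by norm_num)
  constructor
  · set X := {y | ∃ i : ℕ, 1 ≤ i ∧ i ≤ 10 ∧ y = (2 : ℝ) ^ ((2 * (i : ℝ) - 1) / 20)} with hX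
    have hmem : IsApprox (fun x => 2 / x) 1 2 X ((2:ℝ) ^ ((1:ℝ)/20)) := by
      refine ⟨hδ1, ?_⟩
      intro x hx
      obtain ⟨hx1, hx2⟩ := hx
      have hxpos : (0:ℝ) < x := lt_of_lt_of_le one_pos hx1
      have key : ∃ i : ℕ, 1 ≤ i ∧ i ≤ 10 ∧
          (2:ℝ) ^ ((2*(i:ℝ)-2)/20) ≤ x ∧ x ≤ (2:ℝ) ^ ((2*(i:ℝ))/20) := by
        rcases le_or_gt x ((2:ℝ)^((2:ℝ)/20)) with h|h
        · exact ⟨1, le_refl _, by norm_num, by norm_num [Real.rpow_natCast]; linarith, by norm_num; linarith⟩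
        · rcases le_or_gt x ((2:ℝ)^((4:ℝ)/20)) with h'|h'
          · exact ⟨2, by norm_num, by norm_num, by norm_num; linarith, by norm_num; linarith⟩
          rcases le_or_gt x ((2:ℝ)^((6:ℝ)/20)) with h''|h''
          · exact ⟨3, by norm_num, by norm_num, by norm_num; linarith, by norm_num; linarith⟩
          rcases le_or_gt x ((2:ℝ)^((8:ℝ)/20)) with h3|h3
          · exact ⟨4, by norm_num, by norm_num, by norm_num; linarith, by norm_num; linarith⟩
          rcases le_or_gt x ((2:ℝ)^((10:ℝ)/20)) with h4|h4
          · exact ⟨5, by norm_num, by norm_num, by norm_num; linarith, by norm_num; linarith⟩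
          rcases le_or_gt x ((2:ℝ)^((12:ℝ)/20)) with h5|h5
          · exact ⟨6, by norm_num, by norm_num, by norm_num; linarith, by norm_num; linarith⟩
          rcases le_or_gt x ((2:ℝ)^((14:ℝ)/20)) with h6|h6
          · exact ⟨7, by norm_num, by norm_num, by norm_num; linarith, by norm_num; linarith⟩
          rcases le_or_gt x ((2:ℝ)^((16:ℝ)/20)) with h7|h7
          · exact ⟨8, by norm_num, by norm_num, by norm_num; linarith, by norm_num; linarith⟩
          rcases le_or_gt x ((2:ℝ)^((18:ℝ)/20)) with h8|h8
          · exact ⟨9, by norm_num, by norm_num, by norm_num; linarith, by norm_num; linarith⟩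
          · refine ⟨10, by norm_num, le_refl _, by norm_num; linarith, ?_⟩
            have : ((2*((10:ℕ):ℝ))/20) = (1:ℝ) := by norm_num
            rw [this, Real.rpow_one]
            exact hx2
      obtain ⟨i, hi1, hi10, hlo, hhi⟩ := key
      obtain ⟨c1, c2⟩ := step_aux x i hxpos hlo hhi
      exact ⟨(2:ℝ) ^ ((2*(i:ℝ)-1)/20), ⟨i, hi1, hi10, rfl⟩, c1, c2⟩
    unfold approxRatio
    apply le_antisymm
    · exact csInf_le ⟨1, fun δ hδ => hδ.1⟩ hmem
    · refine le_csInf ⟨(2:ℝ) ^ ((1:ℝ)/20), ?_⟩ ?_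
      · exact hmem
      intro δ hδ
      have hδ' : IsApprox (fun x => 2 / x) 1 2 X δ := hδ
      obtain ⟨hδ1', hcov⟩ := hδ'
      obtain ⟨y, ⟨i, hi1, hi10, rfl⟩, hc1, hc2⟩ := hcov 1 (by norm_num)
      have hy : (0:ℝ) < (2:ℝ) ^ ((2*(i:ℝ)-1)/20) := Real.rpow_pos_of_pos h2 _
      simp only [div_one] at hc2
      have hyδ : (2:ℝ) ^ ((2*(i:ℝ)-1)/20) ≤ δ := by
        rw [mul_div_assoc', le_div_iff₀ hy] at hc2
        nlinarith
      calc (2:ℝ) ^ ((1:ℝ)/20) ≤ (2:ℝ) ^ ((2*(i:ℝ)-1)/20) := by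
            apply Real.rpow_le_rpow_of_exponent_le one_le_two
            have : (1:ℝ) ≤ (i:ℝ) := by exact_mod_cast hi1
            linarith
      _ ≤ δ := hyδ
  · intro Y hYsub hYfin hYcard
    have hYne : Y.Nonempty := Set.nonempty_of_ncard_ne_zero (by omega)
    obtain ⟨y₀, hy₀⟩ := hYne
    have hy₀12 := hYsub hy₀
    have hy₀pos : (0:ℝ) < y₀ := lt_of_lt_of_le one_pos hy₀12.1
    have htwo : IsApprox (fun x => 2 / x) 1 2 Y 2 := by
      refine ⟨one_le_two, ?_⟩
      intro x hx
      obtain ⟨hx1, hx2⟩ := hx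
      have hxpos : (0:ℝ) < x := lt_of_lt_of_le one_pos hx1
      refine ⟨y₀, hy₀, ?_, ?_⟩
      · nlinarith [hy₀12.1]
      · simp only
        rw [mul_div_assoc', div_le_div_iff₀ hxpos hy₀pos]
        nlinarith [hy₀12.2]
    unfold approxRatio
    refine le_csInf ⟨2, ?_⟩ ?_
    · exact htwo
    intro δ hδ
    have hδ' : IsApprox (fun x => 2 / x) 1 2 Y δ := hδ
    exact lower_bound Y hYsub hYfin hYcard δ hδ'.1 hδ'.2
end

section
/- Let c>1, μ≥2, and suppose the reference point satisfies r_1 ≤ c^{−1/(μ−1)} and r_2 ≤ c^{−1/(μ−1)}. Then among μ-point subsets {x_1,…,x_μ}⊆[1,c], the hypervolume c·μ + r_1r_2 − c·(r_1/x_1 + Σ_{i=2}^μ x_{i−1}/x_i) − x_μ·r_2 is maximized by x_i = c^{(i−1)/(μ−1)}, in particular x_1=1 and x_μ=c. -/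
open Set Finset Real

noncomputable def hypVol (c r1 r2 : ℝ) (μ : ℕ) (x : ℕ → ℝ) : ℝ :=
  c * (μ : ℝ) + r1 * r2 - c * (r1 / x 1 + ∑ i ∈ Finset.Icc 2 μ, x (i - 1) / x i) - x μ * r2

noncomputable def geomPts (c : ℝ) (μ : ℕ) (i : ℕ) : ℝ :=
  c ^ (((i : ℝ) - 1) / ((μ : ℝ) - 1))

/-- Telescoping sum. -/
lemma tele_sum (f : ℕ → ℝ) (n : ℕ) :
    ∑ i ∈ Finset.Icc 1 n, (f (i - 1) - f i) = f 0 - f n := by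
  induction n with
  | zero => simp
  | succ n ih =>
    rw [Finset.sum_Icc_succ_top (by omega), ih]
    simp

/-- AM-GM in exponential form. -/
lemma amgm_exp (s : Finset ℕ) (z : ℕ → ℝ) (hz : ∀ i ∈ s, 0 < z i) :
    (s.card : ℝ) * Real.exp ((∑ i ∈ s, Real.log (z i)) / s.card) ≤ ∑ i ∈ s, z i := by
  rcases s.eq_empty_or_nonempty with rfl | hs
  · simp
  have hn : (0 : ℝ) < s.card := by
    exact_mod_cast Finset.card_pos.mpr hs
  set A := (∑ i ∈ s, Real.log (z i)) / s.card with hA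
  have key : ∀ i ∈ s, Real.exp A * (1 + (Real.log (z i) - A)) ≤ z i := by
    intro i hi
    have h1 : (Real.log (z i) - A) + 1 ≤ Real.exp (Real.log (z i) - A) :=
      Real.add_one_le_exp _
    have h2 : Real.exp (Real.log (z i) - A) = z i / Real.exp A := by
      rw [Real.exp_sub, Real.exp_log (hz i hi)]
    have h3 : (0 : ℝ) < Real.exp A := Real.exp_pos A
    rw [h2] at h1
    have h4 : Real.exp A * ((Real.log (z i) - A) + 1) ≤ Real.exp A * (z i / Real.exp A) :=
      mul_le_mul_of_nonneg_left h1 h3.le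
    calc Real.exp A * (1 + (Real.log (z i) - A))
        = Real.exp A * ((Real.log (z i) - A) + 1) := by ring
      _ ≤ Real.exp A * (z i / Real.exp A) := h4
      _ = z i := by field_simp
  have hsum : ∑ i ∈ s, Real.exp A * (1 + (Real.log (z i) - A)) = s.card * Real.exp A := by
    rw [← Finset.mul_sum]
    have : ∑ i ∈ s, (1 + (Real.log (z i) - A)) = (s.card : ℝ) := by
      rw [Finset.sum_add_distrib, Finset.sum_const, Finset.sum_sub_distrib,
        Finset.sum_const]
      have : (s.card : ℝ) * A = ∑ i ∈ s, Real.log (z i) := by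
        rw [hA]; field_simp
      simp only [nsmul_eq_mul, mul_one]
      linarith
    rw [this]; ring
  calc (s.card : ℝ) * Real.exp A = ∑ i ∈ s, Real.exp A * (1 + (Real.log (z i) - A)) := hsum.symm
    _ ≤ ∑ i ∈ s, z i := Finset.sum_le_sum key

theorem stmt18 (c : ℝ) (hc : 1 < c) (μ : ℕ) (hμ : 2 ≤ μ) (r1 r2 : ℝ)
    (hr1 : r1 ≤ c ^ (-(1 : ℝ) / ((μ : ℝ) - 1)))
    (hr2 : r2 ≤ c ^ (-(1 : ℝ) / ((μ : ℝ) - 1))) :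
    geomPts c μ 1 = 1 ∧ geomPts c μ μ = c ∧
    ∀ y : ℕ → ℝ, (∀ i, 1 ≤ i → i ≤ μ → y i ∈ Set.Icc 1 c) →
      (∀ i, 1 ≤ i → i < μ → y i < y (i + 1)) →
      hypVol c r1 r2 μ y ≤ hypVol c r1 r2 μ (geomPts c μ) := by
  have hμR : (2 : ℝ) ≤ (μ : ℝ) := by exact_mod_cast hμ
  have hm1 : (0 : ℝ) < (μ : ℝ) - 1 := by linarith
  have hc0 : (0 : ℝ) < c := lt_trans one_pos hc
  have hlogc : 0 < Real.log c := Real.log_pos hc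
  set d := c ^ (-(1 : ℝ) / ((μ : ℝ) - 1)) with hd
  have hd0 : 0 < d := Real.rpow_pos_of_pos hc0 _
  have hlogd : Real.log d = (-(1 : ℝ) / ((μ : ℝ) - 1)) * Real.log c := Real.log_rpow hc0 _
  have g1 : geomPts c μ 1 = 1 := by
    unfold geomPts
    norm_num
  have gμ : geomPts c μ μ = c := by
    unfold geomPts
    rw [div_self hm1.ne', Real.rpow_one]
  refine ⟨g1, gμ, ?_⟩
  intro y hy _hmono
  -- bounds on y
  have hyb : ∀ i, 1 ≤ i → i ≤ μ → 1 ≤ y i ∧ y i ≤ c := by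
    intro i h1 h2
    exact (hy i h1 h2 : y i ∈ Set.Icc 1 c)
  have hy1 := hyb 1 le_rfl (by omega)
  have hyμ := hyb μ (by omega) le_rfl
  have hy1pos : 0 < y 1 := by linarith [hy1.1]
  have hyμpos : 0 < y μ := by linarith [hyμ.1]
  -- sum of geometric ratios
  have hsumg : ∑ i ∈ Finset.Icc 2 μ, geomPts c μ (i - 1) / geomPts c μ i
      = ((μ : ℝ) - 1) * d := by
    have hterm : ∀ i ∈ Finset.Icc 2 μ, geomPts c μ (i - 1) / geomPts c μ i = d := by
      intro i hi
      rw [Finset.mem_Icc] at hi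
      unfold geomPts
      rw [← Real.rpow_sub hc0]
      congr 1
      have : ((i - 1 : ℕ) : ℝ) = (i : ℝ) - 1 := by
        have : 1 ≤ i := by omega
        push_cast [Nat.cast_sub this]
        ring
      rw [this, div_sub_div_same]
      ring_nf
    rw [Finset.sum_congr rfl hterm, Finset.sum_const, Nat.card_Icc]
    have hcard : ((μ + 1 - 2 : ℕ) : ℝ) = (μ : ℝ) - 1 := by
      have h1 : μ + 1 - 2 = μ - 1 := by omega
      rw [h1, Nat.cast_sub (by omega : 1 ≤ μ)]
      push_cast
      ring
    rw [nsmul_eq_mul, hcard]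
  -- definitions for AM-GM
  set Y : ℕ → ℝ := fun i => if i = 0 then d else if i = μ + 1 then c / d else y i with hY
  have hYpos : ∀ i, i ≤ μ + 1 → 0 < Y i := by
    intro i hi
    rw [hY]
    by_cases h0 : i = 0
    · simp [h0, hd0]
    · by_cases h1 : i = μ + 1
      · simp [h0, h1]
        positivity
      · simp [h0, h1]
        have := hyb i (by omega) (by omega)
        linarith [this.1]
  set z : ℕ → ℝ := fun i => c * Y (i - 1) / Y i with hz
  have hzpos : ∀ i ∈ Finset.Icc 1 (μ + 1), 0 < z i := by
    intro i hi
    rw [Finset.mem_Icc] at hi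
    have h1 := hYpos (i - 1) (by omega)
    have h2 := hYpos i (by omega)
    rw [hz]
    positivity
  -- log of each term
  have hlogz : ∀ i ∈ Finset.Icc 1 (μ + 1), Real.log (z i)
      = Real.log c + ((fun j => Real.log (Y j)) (i - 1) - (fun j => Real.log (Y j)) i) := by
    intro i hi
    rw [Finset.mem_Icc] at hi
    have h1 := hYpos (i - 1) (by omega)
    have h2 := hYpos i (by omega)
    rw [hz]
    simp only
    rw [Real.log_div (by positivity) h2.ne', Real.log_mul hc0.ne' h1.ne']
    ring
  have hsumlog : ∑ i ∈ Finset.Icc 1 (μ + 1), Real.log (z i)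
      = (μ : ℝ) * Real.log c + 2 * Real.log d := by
    rw [Finset.sum_congr rfl hlogz, Finset.sum_add_distrib, Finset.sum_const,
      tele_sum (fun j => Real.log (Y j)) (μ + 1), Nat.card_Icc]
    have hY0 : Y 0 = d := by simp [hY]
    have hYμ1 : Y (μ + 1) = c / d := by
      rw [hY]; simp
    rw [hY0, hYμ1, Real.log_div hc0.ne' hd0.ne']
    have : ((μ + 1 + 1 - 1 : ℕ) : ℝ) = (μ : ℝ) + 1 := by push_cast; ring
    rw [nsmul_eq_mul, this]
    ring
  -- AM-GM
  have hAMGM := amgm_exp (Finset.Icc 1 (μ + 1)) z hzpos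
  rw [hsumlog, Nat.card_Icc] at hAMGM
  have hcard2 : ((μ + 1 + 1 - 1 : ℕ) : ℝ) = (μ : ℝ) + 1 := by push_cast; ring
  rw [hcard2] at hAMGM
  have hexp : Real.exp (((μ : ℝ) * Real.log c + 2 * Real.log d) / ((μ : ℝ) + 1)) = c * d := by
    have hcd : c * d = Real.exp (Real.log c + Real.log d) := by
      rw [Real.exp_add, Real.exp_log hc0, Real.exp_log hd0]
    rw [hcd]
    congr 1
    rw [hlogd]
    have hμ1 : (μ : ℝ) + 1 ≠ 0 := by positivity
    field_simp
    ring
  rw [hexp] at hAMGM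
  -- decompose the sum
  have hdecomp : Finset.Icc 1 (μ + 1) = insert 1 (insert (μ + 1) (Finset.Icc 2 μ)) := by
    ext i
    simp only [Finset.mem_Icc, Finset.mem_insert]
    omega
  have hz1 : z 1 = c * d / y 1 := by
    have h1 : (1 : ℕ) ≠ μ + 1 := by omega
    simp [hz, hY, h1, show μ ≠ 0 by omega]
  have hzμ1 : z (μ + 1) = d * y μ := by
    rw [hz, hY]
    simp only
    have h1 : μ + 1 - 1 = μ := by omega
    have h2 : μ ≠ 0 := by omega
    have h3 : μ ≠ μ + 1 := by omega
    simp only [h1, if_neg h2, if_neg h3, if_neg (Nat.succ_ne_zero μ), eq_self_iff_true, ↓reduceIte]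
    rw [eq_comm]
    field_simp
  have hzmid : ∀ i ∈ Finset.Icc 2 μ, z i = c * (y (i - 1) / y i) := by
    intro i hi
    rw [Finset.mem_Icc] at hi
    rw [hz, hY]
    simp only
    have h1 : i - 1 ≠ 0 := by omega
    have h2 : i - 1 ≠ μ + 1 := by omega
    have h3 : i ≠ 0 := by omega
    have h4 : i ≠ μ + 1 := by omega
    simp only [if_neg h1, if_neg h2, if_neg h3, if_neg h4]
    ring
  have hsumz : ∑ i ∈ Finset.Icc 1 (μ + 1), z i
      = c * d / y 1 + c * (∑ i ∈ Finset.Icc 2 μ, y (i - 1) / y i) + d * y μ := by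
    rw [hdecomp, Finset.sum_insert, Finset.sum_insert]
    · rw [hz1, hzμ1, Finset.sum_congr rfl hzmid, ← Finset.mul_sum]
      ring
    · simp only [Finset.mem_Icc]; omega
    · simp only [Finset.mem_insert, Finset.mem_Icc]; omega
  rw [hsumz] at hAMGM
  -- key scalar inequalities
  have hinv1 : 1 / y 1 ≤ 1 := by
    rw [div_le_one hy1pos]; exact hy1.1
  have hinv0 : 0 < 1 / y 1 := by positivity
  have hstep1 : r1 * (1 - 1 / y 1) ≤ d * (1 - 1 / y 1) :=
    mul_le_mul_of_nonneg_right hr1 (by linarith)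
  have hstep2 : r2 * (c - y μ) ≤ d * (c - y μ) :=
    mul_le_mul_of_nonneg_right hr2 (by linarith [hyμ.2])
  -- final assembly
  rw [hypVol, hypVol, g1, gμ, hsumg]
  have e1 : c * r1 - c * (r1 / y 1) ≤ c * d - c * (d / y 1) := by
    have h := mul_le_mul_of_nonneg_left hstep1 hc0.le
    have ha : c * (r1 * (1 - 1 / y 1)) = c * r1 - c * (r1 / y 1) := by ring
    have hb : c * (d * (1 - 1 / y 1)) = c * d - c * (d / y 1) := by ring
    rw [ha, hb] at h
    exact h
  have e2 : c * r2 - y μ * r2 ≤ c * d - d * y μ := by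
    have h := hstep2
    have ha : r2 * (c - y μ) = c * r2 - y μ * r2 := by ring
    have hb : d * (c - y μ) = c * d - d * y μ := by ring
    rw [ha, hb] at h
    exact h
  rw [div_one]
  rw [mul_div_assoc c d (y 1)] at hAMGM
  linarith [hAMGM, e1, e2]
end
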